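/- arXiv:math/0702523 — 12 statements merged into one kernel-verified Lean document; each statement's English description precedes it below -/
import Mathlib

section
/- Let q be a real number with 0 < q and q ≠ 1. Define E_{n,q} = [2]_q (1/(1−q))^n ∑_{l=0}^n C(n,l) (−1)^l / (1 + q^{l+1}). Then E_{0,q} = 1, and for every integer n ≥ 1 one has q·∑_{l=0}^n C(n,l) q^l E_{l,q} + E_{n,q} = 0; moreover for n = 0 one has q·E_{0,q} + E_{0,q} = [2]_q. (In umbral notation: q(qE+1)^n + E_{n,q} equals [2]_q if n = 0 and 0 if n ≠ 0.) -/
/-! With `y = 1/(1-q)` and `c j = (-1)^j / (1 + q^(j+1))`, one has `E_l = [2]_q y^l ∑_j C(l,j) c j`,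
so `q^l E_l` is the same expression with `y` replaced by `x = q y`. Composing the two binomial
transforms, `∑_l C(n,l) x^l ∑_j C(l,j) c j = ∑_j C(n,j) x^j (x+1)^(n-j) c j`, and `x + 1 = y`, so
the umbral sum equals `[2]_q y^n ∑_j C(n,j) q^j c j`. Multiplying by `q` and adding `E_n` turns
`c j` into `(-1)^j`, and `∑_j C(n,j) (-1)^j = 0` for `n ≥ 1`. -/

/-- Kim's `q`-Euler numbers `E_{n,q} = [2]_q (1/(1-q))^n ∑_{l=0}^n C(n,l) (-1)^l / (1+q^{l+1})`. -/
noncomputable def qEulerNumber (q : ℝ) (n : ℕ) : ℝ :=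
  (1 + q) * (1 / (1 - q)) ^ n *
    ∑ l ∈ Finset.range (n + 1), (n.choose l : ℝ) * (-1) ^ l / (1 + q ^ (l + 1))

open Finset

section BinomialTransform

variable {R : Type*} [CommSemiring R]

theorem sum_range_choose_mul_choose_mul_pow (n j : ℕ) (x : R) :
    ∑ l ∈ range (n + 1), (n.choose l * l.choose j : R) * x ^ l
      = n.choose j * x ^ j * (x + 1) ^ (n - j) := by
  rcases lt_or_ge n j with hnj | hjn
  · rw [Nat.choose_eq_zero_of_lt hnj, Nat.cast_zero, zero_mul, zero_mul]
    refine sum_eq_zero fun l hl => ?_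
    rw [Nat.choose_eq_zero_of_lt (show l < j by grind), Nat.cast_zero, mul_zero, zero_mul]
  have hsplit : n + 1 = j + (n - j + 1) := by omega
  rw [hsplit, sum_range_add, sum_eq_zero fun l hl => by
      rw [Nat.choose_eq_zero_of_lt (mem_range.1 hl), Nat.cast_zero, mul_zero, zero_mul],
    zero_add, add_pow, mul_sum]
  refine sum_congr rfl fun m _ => ?_
  rw [← Nat.cast_mul, Nat.choose_mul (Nat.le_add_right j m), Nat.add_sub_cancel_left]
  push_cast
  ring

theorem sum_range_choose_mul_pow_mul_sum_choose (n : ℕ) (x : R) (c : ℕ → R) :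
    ∑ l ∈ range (n + 1), (n.choose l : R) * x ^ l * ∑ j ∈ range (l + 1), (l.choose j : R) * c j
      = ∑ j ∈ range (n + 1), n.choose j * x ^ j * (x + 1) ^ (n - j) * c j := by
  have hextend : ∀ l ∈ range (n + 1), ∑ j ∈ range (l + 1), (l.choose j : R) * c j
      = ∑ j ∈ range (n + 1), (l.choose j : R) * c j := fun l hl =>
    sum_subset (range_subset_range.2 (by grind)) fun j _ hj => by
      rw [Nat.choose_eq_zero_of_lt (by grind), Nat.cast_zero, zero_mul]
  rw [sum_congr rfl fun l hl => by rw [hextend l hl, mul_sum], sum_comm]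
  refine sum_congr rfl fun j _ => ?_
  rw [← sum_range_choose_mul_choose_mul_pow, sum_mul]
  exact sum_congr rfl fun l _ => by ring

end BinomialTransform

theorem sum_range_choose_mul_neg_one_pow {R : Type*} [CommRing R] {n : ℕ} (hn : n ≠ 0) :
    ∑ j ∈ range (n + 1), (n.choose j : R) * (-1) ^ j = 0 := by
  have h := Int.alternating_sum_range_choose_of_ne (n := n) hn
  replace h := congrArg (Int.cast : ℤ → R) h
  push_cast at h
  simpa only [mul_comm] using h

theorem qEulerNumber_eq (q : ℝ) (n : ℕ) :
    qEulerNumber q n = (1 + q) * (1 - q)⁻¹ ^ n *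
      ∑ j ∈ range (n + 1), (n.choose j : ℝ) * ((-1) ^ j / (1 + q ^ (j + 1))) := by
  simp only [qEulerNumber, one_div, mul_div_assoc]

theorem sum_range_choose_mul_pow_mul_qEulerNumber {q : ℝ} (hq1 : q ≠ 1) (n : ℕ) :
    ∑ l ∈ range (n + 1), (n.choose l : ℝ) * q ^ l * qEulerNumber q l
      = (1 + q) * (1 - q)⁻¹ ^ n *
        ∑ j ∈ range (n + 1), (n.choose j : ℝ) * q ^ j * ((-1) ^ j / (1 + q ^ (j + 1))) := by
  set y := (1 - q)⁻¹
  have hy : q * y + 1 = y := by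
    have : 1 - q ≠ 0 := sub_ne_zero.2 hq1.symm
    simp only [y]
    field_simp
    ring
  have hsummand : ∀ l, (n.choose l : ℝ) * q ^ l * qEulerNumber q l = (1 + q) * ((n.choose l : ℝ) *
      (q * y) ^ l * ∑ j ∈ range (l + 1), (l.choose j : ℝ) * ((-1) ^ j / (1 + q ^ (j + 1)))) :=
    fun l => by rw [qEulerNumber_eq, mul_pow]; ring
  rw [sum_congr rfl fun l _ => hsummand l, ← mul_sum, sum_range_choose_mul_pow_mul_sum_choose, hy,
    mul_assoc, mul_sum, mul_sum, mul_sum]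
  refine sum_congr rfl fun j hj => ?_
  rw [mul_pow, ← pow_mul_pow_sub y (mem_range_succ_iff.1 hj)]
  ring

/-- `E_{0,q} = 1`, `q(qE+1)^n + E_{n,q} = 0` for `n ≥ 1`, and `q(qE+1)^0 + E_{0,q} = [2]_q`. -/
theorem qEulerNumber_recurrence (q : ℝ) (hq0 : 0 < q) (hq1 : q ≠ 1) :
    qEulerNumber q 0 = 1 ∧
    (∀ n : ℕ, 1 ≤ n →
      q * (∑ l ∈ Finset.range (n + 1), (n.choose l : ℝ) * q ^ l * qEulerNumber q l)
        + qEulerNumber q n = 0) ∧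
    q * qEulerNumber q 0 + qEulerNumber q 0 = 1 + q := by
  have h0 : qEulerNumber q 0 = 1 := by
    simpa [qEulerNumber] using mul_inv_cancel₀ (by positivity : (1 : ℝ) + q ≠ 0)
  refine ⟨h0, fun n hn => ?_, by rw [h0]; ring⟩
  have hterm : ∀ j : ℕ, q * ((n.choose j : ℝ) * q ^ j * ((-1) ^ j / (1 + q ^ (j + 1))))
      + (n.choose j : ℝ) * ((-1) ^ j / (1 + q ^ (j + 1))) = (n.choose j : ℝ) * (-1) ^ j := by
    intro j
    have : (1 : ℝ) + q ^ (j + 1) ≠ 0 := by positivity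
    field_simp
    ring
  rw [sum_range_choose_mul_pow_mul_qEulerNumber hq1, qEulerNumber_eq, mul_left_comm q, ← mul_add,
    mul_sum, ← sum_add_distrib, sum_congr rfl fun j _ => hterm j,
    sum_range_choose_mul_neg_one_pow (by omega), mul_zero]
end

section
/- Let q be a real number with 0 < q and q ≠ 1, let k be an even positive integer, and let n ≥ 0 be an integer. Then 𝓔_{n,q} − 𝓔_{n,q}(k) = [2]_q ∑_{l=0}^{k−1} (−1)^l [l]_q^n (with the convention [0]_q^0 = 1). -/
/-!
At an integer argument `x = k` the power `q ^ (l k)` is `(q ^ l) ^ k`, so the difference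
`𝓔_{n,q} - 𝓔_{n,q}(k)` has summands `C(n,l) (-1)^l (1 - (q^l)^k) / (1 + q^l)`. For even `k` this
quotient is the geometric sum `∑_{m<k} (-q^l)^m`; exchanging the two sums, the inner sum over `l`
collapses by the binomial theorem to `(-1)^m (1 - q^m)^n`.
-/

/-- The modified `q`-Euler polynomials
`𝓔_{n,q}(x) = [2]_q (1/(1-q))^n ∑_{l=0}^n C(n,l) (-1)^l q^{lx}/(1+q^l)`
(here `q ^ ((l : ℝ) * x)` is the real power `rpow`). -/
noncomputable def modqEulerPoly (q : ℝ) (n : ℕ) (x : ℝ) : ℝ :=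
  (1 + q) * (1 / (1 - q)) ^ n *
    ∑ l ∈ Finset.range (n + 1),
      (n.choose l : ℝ) * (-1) ^ l * q ^ ((l : ℝ) * x) / (1 + q ^ l)

open Finset

theorem one_sub_pow_div_one_add_of_even {K : Type*} [Field K] {k : ℕ} (hk : Even k) {y : K}
    (hy : 1 + y ≠ 0) : (1 - y ^ k) / (1 + y) = ∑ m ∈ range k, (-y) ^ m := by
  rw [div_eq_iff hy, ← hk.neg_pow, ← mul_neg_geom_sum, sub_neg_eq_add, mul_comm]

theorem sum_range_choose_mul_neg_pow {R : Type*} [CommRing R] (y : R) (n : ℕ) :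
    ∑ l ∈ range (n + 1), (n.choose l : R) * (-y) ^ l = (1 - y) ^ n := by
  rw [sub_eq_neg_add, add_pow]
  refine sum_congr rfl fun l _ => ?_
  rw [one_pow, mul_one, mul_comm]

theorem modqEulerPoly_natCast (q : ℝ) (n k : ℕ) :
    modqEulerPoly q n k = (1 + q) * (1 / (1 - q)) ^ n *
      ∑ l ∈ range (n + 1), (n.choose l : ℝ) * (-1) ^ l * (q ^ l) ^ k / (1 + q ^ l) := by
  simp only [modqEulerPoly, ← Nat.cast_mul, Real.rpow_natCast, pow_mul]

theorem modqEulerPoly_zero (q : ℝ) (n : ℕ) :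
    modqEulerPoly q n 0 = (1 + q) * (1 / (1 - q)) ^ n *
      ∑ l ∈ range (n + 1), (n.choose l : ℝ) * (-1) ^ l / (1 + q ^ l) := by
  simpa using modqEulerPoly_natCast q n 0

theorem modqEuler_even_sum_general (q : ℝ) (hq0 : 0 < q)
    (k : ℕ) (hke : Even k) (n : ℕ) :
    modqEulerPoly q n 0 - modqEulerPoly q n (k : ℝ) =
      (1 + q) * ∑ l ∈ Finset.range k, (-1) ^ l * ((1 - q ^ l) / (1 - q)) ^ n := by
  have hgeom (l : ℕ) : (1 - (q ^ l) ^ k) / (1 + q ^ l) = ∑ m ∈ range k, (-q ^ l) ^ m :=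
    one_sub_pow_div_one_add_of_even hke (by positivity)
  calc modqEulerPoly q n 0 - modqEulerPoly q n (k : ℝ)
      = (1 + q) * (1 / (1 - q)) ^ n * ∑ l ∈ range (n + 1),
          (n.choose l : ℝ) * (-1) ^ l * ((1 - (q ^ l) ^ k) / (1 + q ^ l)) := by
        rw [modqEulerPoly_zero, modqEulerPoly_natCast, ← mul_sub, ← sum_sub_distrib]
        congr 1
        exact sum_congr rfl fun l _ => by ring
    _ = (1 + q) * (1 / (1 - q)) ^ n * ∑ m ∈ range k, (-1) ^ m *
          ∑ l ∈ range (n + 1), (n.choose l : ℝ) * (-q ^ m) ^ l := by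
        simp only [hgeom, mul_sum]
        rw [sum_comm]
        refine sum_congr rfl fun m _ => sum_congr rfl fun l _ => ?_
        rw [neg_pow (q ^ l), neg_pow (q ^ m), ← pow_mul, ← pow_mul, mul_comm l m]
        ring
    _ = (1 + q) * ∑ m ∈ range k, (-1) ^ m * ((1 - q ^ m) / (1 - q)) ^ n := by
        simp only [sum_range_choose_mul_neg_pow]
        rw [mul_assoc, mul_sum]
        refine congrArg _ (sum_congr rfl fun m _ => ?_)
        rw [div_eq_mul_one_div (1 - q ^ m), mul_pow]
        ring

/-- For even positive `k`:
`𝓔_{n,q} - 𝓔_{n,q}(k) = [2]_q ∑_{l=0}^{k-1} (-1)^l [l]_q^n`. -/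
theorem modqEuler_even_sum (q : ℝ) (hq0 : 0 < q) (hq1 : q ≠ 1)
    (k : ℕ) (hk : 0 < k) (hke : Even k) (n : ℕ) :
    modqEulerPoly q n 0 - modqEulerPoly q n (k : ℝ) =
      (1 + q) * ∑ l ∈ Finset.range k, (-1) ^ l * ((1 - q ^ l) / (1 - q)) ^ n :=
  modqEuler_even_sum_general q hq0 k hke n
end

section
/- Let q be a real number with 0 < q < 1, let x ≥ 0 be real, and let k ≥ 0 be an integer. For each z with 0 ≤ z < 1 the series ∑_{n=0}^∞ (−1)^n z^n [n+x]_q^k converges absolutely, and the Abel limit as z → 1⁻ of [2]_q ∑_{n=0}^∞ (−1)^n z^n [n+x]_q^k exists and equals 𝓔_{k,q}(x). (This is the precise meaning of the identity 𝓔_{k,q}(x) = [2]_q ∑_{n=0}^∞ (−1)^n [n+x]_q^k.) -/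
/-!
By the binomial theorem `[n+x]_q^k = (1-q)^{-k} ∑_l C(k,l) (-1)^l q^{lx} (q^l)^n`, so the series
splits into `k + 1` geometric series in `-z q^l`. For `|z| < 1` it therefore sums to the rational
function `(1-q)^{-k} ∑_l C(k,l) (-1)^l q^{lx} / (1 + z q^l)`, which is continuous at `z = 1`, where
`[2]_q` times its value is `𝓔_{k,q}(x)`.
-/

noncomputable def qNum (q y : ℝ) : ℝ :=
  (1 - q ^ y) / (1 - q)

noncomputable def qEulerAbelSum (q : ℝ) (k : ℕ) (x z : ℝ) : ℝ :=
  ∑ l ∈ Finset.range (k + 1),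
    (1 / (1 - q)) ^ k * (k.choose l : ℝ) * (-1) ^ l * q ^ ((l : ℝ) * x) * (1 + z * q ^ l)⁻¹

lemma modqEulerPoly_eq_qEulerAbelSum_one (q : ℝ) (k : ℕ) (x : ℝ) :
    modqEulerPoly q k x = (1 + q) * qEulerAbelSum q k x 1 := by
  rw [modqEulerPoly, qEulerAbelSum, mul_assoc, Finset.mul_sum]
  congr 1
  refine Finset.sum_congr rfl fun l _ => ?_
  rw [one_mul, div_eq_mul_inv]
  ring

lemma qNum_pow_eq_sum {q : ℝ} (hq : 0 < q) (x : ℝ) (n k : ℕ) :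
    qNum q (n + x) ^ k =
      ∑ l ∈ Finset.range (k + 1),
        (1 / (1 - q)) ^ k * (k.choose l : ℝ) * (-1) ^ l * q ^ ((l : ℝ) * x) * (q ^ l) ^ n := by
  have hsplit : q ^ ((n : ℝ) + x) = q ^ x * q ^ n := by
    rw [Real.rpow_add hq, Real.rpow_natCast, mul_comm]
  rw [qNum, ← one_div_mul_eq_div, mul_pow, hsplit, sub_eq_neg_add 1 (q ^ x * q ^ n), add_pow,
    Finset.mul_sum]
  refine Finset.sum_congr rfl fun l _ => ?_
  rw [mul_comm (l : ℝ) x, Real.rpow_mul hq.le, Real.rpow_natCast]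
  ring

lemma hasSum_alternating_geometric {z r : ℝ} (h : |z * r| < 1) :
    HasSum (fun n : ℕ => (-1) ^ n * z ^ n * r ^ n) (1 + z * r)⁻¹ := by
  have := hasSum_geometric_of_abs_lt_one (r := -(z * r)) (by rwa [abs_neg])
  rw [sub_neg_eq_add] at this
  exact this.congr_fun fun n => by rw [neg_pow (z * r), mul_pow, mul_assoc]

lemma hasSum_qEulerAbelSum {q : ℝ} (hq0 : 0 < q) (hq1 : q ≤ 1) (x : ℝ) (k : ℕ) {z : ℝ}
    (hz : |z| < 1) :
    HasSum (fun n : ℕ => (-1) ^ n * z ^ n * qNum q (n + x) ^ k) (qEulerAbelSum q k x z) := by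
  simp_rw [qNum_pow_eq_sum hq0, Finset.mul_sum]
  refine hasSum_sum fun l _ => ?_
  have hzq : |z * q ^ l| < 1 := by
    rw [abs_mul, abs_of_pos (pow_pos hq0 l)]
    exact (mul_le_of_le_one_right (abs_nonneg z) (pow_le_one₀ hq0.le hq1)).trans_lt hz
  exact ((hasSum_alternating_geometric hzq).mul_left _).congr_fun fun n => by ring

lemma continuousAt_qEulerAbelSum {q : ℝ} (hq : 0 ≤ q) (k : ℕ) (x : ℝ) :
    ContinuousAt (qEulerAbelSum q k x) 1 := by
  refine tendsto_finsetSum _ fun l _ => ContinuousAt.tendsto ?_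
  have hden : 1 + 1 * q ^ l ≠ 0 := by positivity
  fun_prop (disch := assumption)

theorem modqEulerPoly_eq_abel_sum_general (q x : ℝ) (hq0 : 0 < q) (hq1 : q < 1)
    (k : ℕ) :
    (∀ z : ℝ, 0 ≤ z → z < 1 →
      Summable fun n : ℕ =>
        |(-1) ^ n * z ^ n * ((1 - q ^ ((n : ℝ) + x)) / (1 - q)) ^ k|) ∧
    Filter.Tendsto
      (fun z : ℝ =>
        (1 + q) * ∑' n : ℕ, (-1) ^ n * z ^ n * ((1 - q ^ ((n : ℝ) + x)) / (1 - q)) ^ k)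
      (nhdsWithin 1 (Set.Ico 0 1)) (nhds (modqEulerPoly q k x)) := by
  have hasSum {z : ℝ} (hz : z ∈ Set.Ico 0 1) :=
    hasSum_qEulerAbelSum hq0 hq1.le x k (abs_lt.mpr ⟨by linarith [hz.1], hz.2⟩)
  refine ⟨fun z hz0 hz1 => (hasSum ⟨hz0, hz1⟩).summable.abs, ?_⟩
  rw [modqEulerPoly_eq_qEulerAbelSum_one]
  refine (((continuousAt_qEulerAbelSum hq0.le k x).tendsto.mono_left
    nhdsWithin_le_nhds).const_mul (1 + q)).congr' ?_
  filter_upwards [self_mem_nhdsWithin] with z hz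
  exact congrArg _ (hasSum hz).tsum_eq.symm

/-- `𝓔_{k,q}(x) = [2]_q ∑_{n=0}^∞ (-1)^n [n+x]_q^k` in the Abel sense: the series
`∑ (-1)^n z^n [n+x]_q^k` converges absolutely for `0 ≤ z < 1`, and
`[2]_q` times its sum tends to `𝓔_{k,q}(x)` as `z → 1⁻`. -/
theorem modqEulerPoly_eq_abel_sum (q x : ℝ) (hq0 : 0 < q) (hq1 : q < 1)
    (hx : 0 ≤ x) (k : ℕ) :
    (∀ z : ℝ, 0 ≤ z → z < 1 →
      Summable fun n : ℕ =>
        |(-1) ^ n * z ^ n * ((1 - q ^ ((n : ℝ) + x)) / (1 - q)) ^ k|) ∧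
    Filter.Tendsto
      (fun z : ℝ =>
        (1 + q) * ∑' n : ℕ, (-1) ^ n * z ^ n * ((1 - q ^ ((n : ℝ) + x)) / (1 - q)) ^ k)
      (nhdsWithin 1 (Set.Ico 0 1)) (nhds (modqEulerPoly q k x)) :=
  modqEulerPoly_eq_abel_sum_general q x hq0 hq1 k
end

section
/- Let q be a real number with 0 < q < 1, let x ≥ 0 be real, and let t be real. Then the series F_q(t,x) = ∑_{n=0}^∞ 𝓔_{n,q}(x) t^n/n! converges absolutely, for each z with 0 ≤ z < 1 the series ∑_{k=0}^∞ (−1)^k z^k exp([k+x]_q t) converges absolutely, and the Abel limit as z → 1⁻ of [2]_q ∑_{k=0}^∞ (−1)^k z^k exp([k+x]_q t) exists and equals F_q(t,x). (This is the precise meaning of the generating-function identity F_q(t,x) = [2]_q ∑_{k=0}^∞ (−1)^k e^{[k+x]_q t}.) -/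
/-!
Write `[k+x]_q t = s (1 - u q^k)` with `s = t/(1-q)` and `u = q^x`. For `0 ≤ z < 1` the double
series `∑_k ∑_n (-z)^k (s (1 - u q^k))^n / n!` converges absolutely, so the exponentials may be
expanded and the sums swapped; expanding `(1 - u q^k)^n` binomially, the inner sum over `k` is
geometric and gives `∑_l C(n,l) (-u)^l / (1 + z q^l)`. These coefficients are bounded by
`(1 + u)^n` uniformly in `z ≥ 0`, so dominated convergence lets `z → 1⁻`, where they become the
coefficients of `𝓔_{n,q}(x)`.
-/

open Finset Filter Topology
open scoped Nat

section GeometricExp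

variable {w A : ℝ} {a : ℕ → ℝ}

theorem Real.hasSum_pow_div_factorial_exp (y : ℝ) :
    HasSum (fun n : ℕ => y ^ n / n !) (Real.exp y) :=
  Real.exp_eq_exp_ℝ ▸ NormedSpace.expSeries_div_hasSum_exp y

theorem summable_abs_geometric_mul_exp (hw : |w| < 1) (ha : ∀ k, |a k| ≤ A) :
    Summable fun k => |w ^ k * Real.exp (a k)| := by
  refine .of_nonneg_of_le (fun _ => abs_nonneg _) (fun k => ?_)
    ((summable_geometric_of_lt_one (abs_nonneg w) hw).mul_right (Real.exp A))
  rw [abs_mul, abs_pow, Real.abs_exp]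
  gcongr
  exact (le_abs_self _).trans (ha k)

theorem summable_uncurry_geometric_mul_pow_div_factorial (hw : |w| < 1) (ha : ∀ k, |a k| ≤ A) :
    Summable (Function.uncurry fun k n : ℕ => w ^ k * (a k ^ n / n !)) := by
  have hA : 0 ≤ A := (abs_nonneg _).trans (ha 0)
  refine .of_norm_bounded ((summable_geometric_of_lt_one (abs_nonneg w) hw).mul_of_nonneg
    (Real.summable_pow_div_factorial A) (fun _ => by positivity) (fun _ => by positivity))
    fun ⟨k, n⟩ => ?_
  simp only [Function.uncurry_apply_pair, Real.norm_eq_abs, abs_mul, abs_div, abs_pow,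
    Nat.abs_cast]
  gcongr
  exact ha k

theorem tsum_geometric_mul_exp (hw : |w| < 1) (ha : ∀ k, |a k| ≤ A) :
    ∑' k, w ^ k * Real.exp (a k) = ∑' n, ∑' k, w ^ k * (a k ^ n / n !) := by
  simp_rw [← ((Real.hasSum_pow_div_factorial_exp _).mul_left _).tsum_eq]
  exact (summable_uncurry_geometric_mul_pow_div_factorial hw ha).tsum_comm.symm

end GeometricExp

/-- `eulerSum (q ^ x) q 1 n` is the sum in `modqEulerPoly`; `z` is the Abel damping parameter. -/
noncomputable def eulerSum (u r z : ℝ) (n : ℕ) : ℝ :=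
  ∑ l ∈ range (n + 1), n.choose l * (-u) ^ l / (1 + z * r ^ l)

section EulerSum

variable {u r z : ℝ}

theorem hasSum_neg_geometric_mul_one_sub_mul_pow (hz : |z| < 1) (hr : |r| ≤ 1) (n : ℕ) :
    HasSum (fun k : ℕ => (-z) ^ k * (1 - u * r ^ k) ^ n) (eulerSum u r z n) := by
  have hbinom : ∀ k : ℕ, (-z) ^ k * (1 - u * r ^ k) ^ n
      = ∑ l ∈ range (n + 1), n.choose l * (-u) ^ l * (-(z * r ^ l)) ^ k := by
    intro k
    rw [sub_eq_neg_add, add_pow, mul_sum]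
    refine sum_congr rfl fun l _ => ?_
    rw [← neg_mul, mul_pow, neg_mul_eq_neg_mul, mul_pow, ← pow_mul, ← pow_mul, mul_comm l k]
    ring
  have hgeom : ∀ l ∈ range (n + 1), HasSum (fun k : ℕ => n.choose l * (-u) ^ l * (-(z * r ^ l)) ^ k)
      (n.choose l * (-u) ^ l / (1 + z * r ^ l)) := by
    intro l _
    have hratio : |-(z * r ^ l)| < 1 := by
      rw [abs_neg, abs_mul, abs_pow]
      exact mul_lt_one_of_nonneg_of_lt_one_left (abs_nonneg z) hz (pow_le_one₀ (abs_nonneg r) hr)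
    simpa [div_eq_mul_inv, sub_neg_eq_add] using (hasSum_geometric_of_abs_lt_one hratio).mul_left _
  simp_rw [hbinom]
  exact hasSum_sum hgeom

theorem abs_eulerSum_le (hz : 0 ≤ z) (hr : 0 ≤ r) (n : ℕ) :
    |eulerSum u r z n| ≤ (1 + |u|) ^ n := by
  calc |eulerSum u r z n|
      ≤ ∑ l ∈ range (n + 1), |(n.choose l : ℝ) * (-u) ^ l / (1 + z * r ^ l)| :=
        abs_sum_le_sum_abs _ _
    _ ≤ ∑ l ∈ range (n + 1), |u| ^ l * 1 ^ (n - l) * n.choose l := by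
        refine sum_le_sum fun l _ => ?_
        have hden : 1 ≤ 1 + z * r ^ l := le_add_of_nonneg_right (by positivity)
        rw [abs_div, abs_of_pos (zero_lt_one.trans_le hden), abs_mul, abs_pow, abs_neg,
          Nat.abs_cast, one_pow, mul_one, mul_comm]
        exact div_le_self (by positivity) hden
    _ = (1 + |u|) ^ n := by rw [add_comm 1, add_pow]

theorem continuousOn_eulerSum (hr : 0 ≤ r) (n : ℕ) :
    ContinuousOn (fun z => eulerSum u r z n) (Set.Ici 0) := by
  refine continuousOn_finsetSum _ fun l _ => ?_
  refine continuousOn_const.div (by fun_prop) fun z (hz : 0 ≤ z) => ?_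
  positivity

theorem abs_mul_one_sub_mul_pow_le (hr : |r| ≤ 1) (s : ℝ) (k : ℕ) :
    |s * (1 - u * r ^ k)| ≤ |s| * (1 + |u|) := by
  rw [abs_mul]
  gcongr
  calc |1 - u * r ^ k| ≤ |1| + |u * r ^ k| := abs_sub _ _
    _ ≤ 1 + |u| := by
        rw [abs_one, abs_mul, abs_pow]
        gcongr
        exact mul_le_of_le_one_right (abs_nonneg u) (pow_le_one₀ (abs_nonneg r) hr)

theorem tsum_neg_geometric_mul_exp (hz : |z| < 1) (hr : |r| ≤ 1) (s : ℝ) :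
    ∑' k : ℕ, (-z) ^ k * Real.exp (s * (1 - u * r ^ k)) = ∑' n, s ^ n / n ! * eulerSum u r z n := by
  rw [tsum_geometric_mul_exp (by rwa [abs_neg]) (abs_mul_one_sub_mul_pow_le hr s)]
  refine tsum_congr fun n => ?_
  rw [← ((hasSum_neg_geometric_mul_one_sub_mul_pow hz hr n).mul_left (s ^ n / n !)).tsum_eq]
  exact tsum_congr fun k => by rw [mul_pow]; ring

theorem abs_pow_div_factorial_mul_eulerSum_le (hz : 0 ≤ z) (hr : 0 ≤ r) (s : ℝ) (n : ℕ) :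
    |s ^ n / n ! * eulerSum u r z n| ≤ (|s| * (1 + |u|)) ^ n / n ! := by
  rw [abs_mul, abs_div, abs_pow, Nat.abs_cast, mul_pow, mul_div_right_comm]
  gcongr
  exact abs_eulerSum_le hz hr n

theorem tendsto_tsum_pow_div_factorial_mul_eulerSum (hr : 0 ≤ r) (s : ℝ) :
    Tendsto (fun z => ∑' n, s ^ n / n ! * eulerSum u r z n) (𝓝[Set.Ico 0 1] 1)
      (𝓝 (∑' n, s ^ n / n ! * eulerSum u r 1 n)) := by
  refine tendsto_tsum_of_dominated_convergence (Real.summable_pow_div_factorial (|s| * (1 + |u|)))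
    (fun n => ?_) ?_
  · have hcont : ContinuousWithinAt (fun z => eulerSum u r z n) (Set.Ico 0 1) 1 :=
      (continuousOn_eulerSum hr n 1 (Set.mem_Ici.mpr zero_le_one)).mono Set.Ico_subset_Ici_self
    exact hcont.tendsto.const_mul _
  · filter_upwards [self_mem_nhdsWithin] with z hz n
    exact abs_pow_div_factorial_mul_eulerSum_le hz.1 hr s n

end EulerSum

theorem modqEulerPoly_eq_eulerSum {q : ℝ} (hq : 0 < q) (n : ℕ) (x : ℝ) :
    modqEulerPoly q n x = (1 + q) * (1 / (1 - q)) ^ n * eulerSum (q ^ x) q 1 n := by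
  refine congrArg _ (sum_congr rfl fun l _ => ?_)
  rw [mul_comm (l : ℝ), Real.rpow_mul hq.le, Real.rpow_natCast, neg_pow, one_mul]
  ring

theorem modqEulerPoly_generating_function_general (q x t : ℝ) (hq0 : 0 < q) (hq1 : q < 1) :
    (Summable fun n : ℕ => |modqEulerPoly q n x * t ^ n / (n.factorial : ℝ)|) ∧
    (∀ z : ℝ, 0 ≤ z → z < 1 →
      Summable fun k : ℕ =>
        |(-1) ^ k * z ^ k * Real.exp ((1 - q ^ ((k : ℝ) + x)) / (1 - q) * t)|) ∧
    Filter.Tendsto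
      (fun z : ℝ =>
        (1 + q) * ∑' k : ℕ, (-1) ^ k * z ^ k * Real.exp ((1 - q ^ ((k : ℝ) + x)) / (1 - q) * t))
      (nhdsWithin 1 (Set.Ico 0 1))
      (nhds (∑' n : ℕ, modqEulerPoly q n x * t ^ n / (n.factorial : ℝ))) := by
  have hq : |q| ≤ 1 := by rw [abs_of_pos hq0]; exact hq1.le
  have hterm : ∀ (z : ℝ) (k : ℕ),
      (-1) ^ k * z ^ k * Real.exp ((1 - q ^ ((k : ℝ) + x)) / (1 - q) * t)
        = (-z) ^ k * Real.exp (t / (1 - q) * (1 - q ^ x * q ^ k)) := fun z k => by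
    rw [neg_pow, Real.rpow_add hq0, Real.rpow_natCast]; ring_nf
  have hcoeff : ∀ n : ℕ, modqEulerPoly q n x * t ^ n / n !
      = (1 + q) * ((t / (1 - q)) ^ n / n ! * eulerSum (q ^ x) q 1 n) := fun n => by
    rw [modqEulerPoly_eq_eulerSum hq0, div_pow]; ring
  refine ⟨?_, fun z hz0 hz1 => ?_, ?_⟩
  · refine .of_nonneg_of_le (fun _ => abs_nonneg _) (fun n => ?_)
      ((Real.summable_pow_div_factorial (|t / (1 - q)| * (1 + |q ^ x|))).mul_left (1 + q))
    rw [hcoeff, abs_mul, abs_of_pos (by positivity)]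
    gcongr
    exact abs_pow_div_factorial_mul_eulerSum_le zero_le_one hq0.le _ n
  · simp only [hterm]
    exact summable_abs_geometric_mul_exp (by rwa [abs_neg, abs_of_nonneg hz0])
      (abs_mul_one_sub_mul_pow_le hq _)
  · simp_rw [hcoeff, tsum_mul_left]
    refine ((tendsto_tsum_pow_div_factorial_mul_eulerSum hq0.le _).const_mul (1 + q)).congr' ?_
    filter_upwards [self_mem_nhdsWithin] with z ⟨hz0, hz1⟩
    simp only [hterm]
    rw [tsum_neg_geometric_mul_exp (by rwa [abs_of_nonneg hz0]) hq]

/-- The generating function identity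
`F_q(t,x) = ∑_{n≥0} 𝓔_{n,q}(x) t^n/n! = [2]_q ∑_{k≥0} (-1)^k e^{[k+x]_q t}`
in the Abel sense: the exponential generating series converges absolutely, the series
`∑ (-1)^k z^k exp([k+x]_q t)` converges absolutely for `0 ≤ z < 1`, and `[2]_q` times
its sum tends to `F_q(t,x)` as `z → 1⁻`. -/
theorem modqEulerPoly_generating_function (q x t : ℝ) (hq0 : 0 < q) (hq1 : q < 1)
    (hx : 0 ≤ x) :
    (Summable fun n : ℕ => |modqEulerPoly q n x * t ^ n / (n.factorial : ℝ)|) ∧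
    (∀ z : ℝ, 0 ≤ z → z < 1 →
      Summable fun k : ℕ =>
        |(-1) ^ k * z ^ k * Real.exp ((1 - q ^ ((k : ℝ) + x)) / (1 - q) * t)|) ∧
    Filter.Tendsto
      (fun z : ℝ =>
        (1 + q) * ∑' k : ℕ, (-1) ^ k * z ^ k * Real.exp ((1 - q ^ ((k : ℝ) + x)) / (1 - q) * t))
      (nhdsWithin 1 (Set.Ico 0 1))
      (nhds (∑' n : ℕ, modqEulerPoly q n x * t ^ n / (n.factorial : ℝ))) :=
  modqEulerPoly_generating_function_general q x t hq0 hq1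
end

section
/- Let q be a real number with 0 < q and q ≠ 1, let d be an odd positive integer, let n ≥ 0 be an integer, and let x be real. Then 𝓔_{n,q}(x) = [d]_q^n · ([2]_q/[2]_{q^d}) · ∑_{a=0}^{d−1} (−1)^a 𝓔_{n,q^d}((x+a)/d), where 𝓔_{n,q^d} denotes the modified q-Euler polynomial with q replaced by q^d. -/
/-!
For each `l`, the `l`-th term of `𝓔_{n,q^d}((x+a)/d)` carries `(q^d)^{l(x+a)/d} = q^{lx} (q^l)^a`,
so the alternating sum over `a < d` produces the geometric sum `∑_{a<d} (-q^l)^a`, which for odd `d`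
equals `(1 + q^{dl})/(1 + q^l)`. This trades the denominator `1 + (q^d)^l` of `𝓔_{n,q^d}` for the
denominator `1 + q^l` of `𝓔_{n,q}`; the prefactors then match up to `[d]_q^n [2]_q/[2]_{q^d}`.
-/

open Finset

theorem geom_sum_neg_of_odd {K : Type*} [Field K] {r : K} (hr : 1 + r ≠ 0) {d : ℕ}
    (hd : Odd d) : ∑ a ∈ range d, (-r) ^ a = (1 + r ^ d) / (1 + r) := by
  have hr' : -r - 1 ≠ 0 := fun h => hr (by linear_combination -h)
  rw [geom_sum_eq (fun h => hr' (by rw [h, sub_self])), hd.neg_pow,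
    div_eq_div_iff hr' hr]
  ring

theorem rpow_pow_mul_add_div {q : ℝ} (hq : 0 < q) {d : ℕ} (hd : d ≠ 0) (l a : ℕ) (x : ℝ) :
    (q ^ d) ^ ((l : ℝ) * ((x + a) / d)) = q ^ ((l : ℝ) * x) * (q ^ l) ^ a := by
  rw [← Real.rpow_natCast q d, ← Real.rpow_natCast (q ^ l) a, ← Real.rpow_natCast q l,
    ← Real.rpow_mul hq.le, ← Real.rpow_mul hq.le, ← Real.rpow_add hq]
  congr 1
  field_simp

theorem sum_range_neg_one_pow_mul_modqEulerPoly_pow {q : ℝ} (hq : 0 < q) {d : ℕ} (hd : Odd d)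
    (n : ℕ) (x : ℝ) :
    ∑ a ∈ range d, (-1) ^ a * modqEulerPoly (q ^ d) n ((x + a) / d) =
      (1 + q ^ d) * (1 / (1 - q ^ d)) ^ n *
        ∑ l ∈ range (n + 1), (n.choose l : ℝ) * (-1) ^ l * q ^ ((l : ℝ) * x) / (1 + q ^ l) := by
  simp only [modqEulerPoly, mul_sum]
  rw [sum_comm]
  refine sum_congr rfl fun l _ => ?_
  have hgeom := geom_sum_neg_of_odd (r := q ^ l) (by positivity) hd
  calc ∑ a ∈ range d, (-1) ^ a * ((1 + q ^ d) * (1 / (1 - q ^ d)) ^ n *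
          ((n.choose l : ℝ) * (-1) ^ l * (q ^ d) ^ ((l : ℝ) * ((x + a) / d)) / (1 + (q ^ d) ^ l)))
      = (1 + q ^ d) * (1 / (1 - q ^ d)) ^ n *
          ((n.choose l : ℝ) * (-1) ^ l * q ^ ((l : ℝ) * x) / (1 + (q ^ l) ^ d)) *
          ∑ a ∈ range d, (-q ^ l) ^ a := by
        rw [mul_sum]
        refine sum_congr rfl fun a _ => ?_
        rw [rpow_pow_mul_add_div hq hd.pos.ne', neg_pow]
        ring
    _ = _ := by
        rw [hgeom]
        field_simp

theorem modqEulerPoly_distribution_general (q : ℝ) (hq0 : 0 < q) (hq1 : q ≠ 1)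
    (d : ℕ) (hdo : Odd d) (n : ℕ) (x : ℝ) :
    modqEulerPoly q n x =
      ((1 - q ^ d) / (1 - q)) ^ n * ((1 + q) / (1 + q ^ d)) *
        ∑ a ∈ Finset.range d, (-1) ^ a * modqEulerPoly (q ^ d) n ((x + a) / d) := by
  have h1q : 1 - q ≠ 0 := sub_ne_zero.mpr hq1.symm
  have h1qd : 1 - q ^ d ≠ 0 :=
    sub_ne_zero.mpr fun h => hq1 ((pow_eq_one_iff_of_nonneg hq0.le hdo.pos.ne').mp h.symm)
  have hscale : ((1 - q ^ d) / (1 - q)) ^ n * (1 / (1 - q ^ d)) ^ n = (1 / (1 - q)) ^ n := by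
    rw [← mul_pow]
    field_simp
  have h1pqd : 1 + q ^ d ≠ 0 := by positivity
  rw [sum_range_neg_one_pow_mul_modqEulerPoly_pow hq0 hdo, modqEulerPoly, ← hscale]
  generalize (∑ l ∈ range (n + 1), _ : ℝ) = S
  field_simp

/-- Distribution relation: for odd positive `d`,
`𝓔_{n,q}(x) = [d]_q^n ([2]_q/[2]_{q^d}) ∑_{a=0}^{d-1} (-1)^a 𝓔_{n,q^d}((x+a)/d)`. -/
theorem modqEulerPoly_distribution (q : ℝ) (hq0 : 0 < q) (hq1 : q ≠ 1)
    (d : ℕ) (hd : 0 < d) (hdo : Odd d) (n : ℕ) (x : ℝ) :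
    modqEulerPoly q n x =
      ((1 - q ^ d) / (1 - q)) ^ n * ((1 + q) / (1 + q ^ d)) *
        ∑ a ∈ Finset.range d, (-1) ^ a * modqEulerPoly (q ^ d) n ((x + a) / d) :=
  modqEulerPoly_distribution_general q hq0 hq1 d hdo n x
end

section
/- Let q be a real number with 0 < q < 1, let d be an odd positive integer, let χ be a Dirichlet character modulo d, and let t be real. Then the series F_{χ,q}(t) = ∑_{n=0}^∞ 𝓔_{n,χ,q} t^n/n! converges absolutely, for each z with 0 ≤ z < 1 the series ∑_{n=0}^∞ χ(n)(−1)^n z^n exp([n]_q t) converges absolutely, and the Abel limit as z → 1⁻ of [2]_q ∑_{n=0}^∞ χ(n)(−1)^n z^n exp([n]_q t) exists and equals F_{χ,q}(t). (This is the precise meaning of the identity F_{χ,q}(t) = [2]_q ∑_{n=0}^∞ χ(n)(−1)^n e^{[n]_q t}.) -/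
/-- The modified generalized `q`-Euler numbers attached to a Dirichlet character `χ` mod `d`:
`𝓔_{n,χ,q} = [d]_q^n ([2]_q/[2]_{q^d}) ∑_{a=0}^{d-1} χ(a)(-1)^a 𝓔_{n,q^d}(a/d)`. -/
noncomputable def modqEulerNumberChi (q : ℝ) (d : ℕ) (χ : DirichletCharacter ℂ d)
    (n : ℕ) : ℂ :=
  ((((1 - q ^ d) / (1 - q)) ^ n * ((1 + q) / (1 + q ^ d)) : ℝ) : ℂ) *
    ∑ a ∈ Finset.range d,
      χ (a : ZMod d) * (-1) ^ a * ((modqEulerPoly (q ^ d) n ((a : ℝ) / d) : ℝ) : ℂ)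

open Finset Filter Topology Nat

-- The closed form of `∑ χ(n) (-1)^n w^n` (see `hasSum_altCharSeries`), which, unlike the
-- series, stays meaningful on all of `[0, 1]`.
noncomputable def altCharSeries {d : ℕ} (χ : DirichletCharacter ℂ d) (w : ℂ) : ℂ :=
  (∑ a ∈ range d, χ a * (-1) ^ a * w ^ a) / (1 + w ^ d)

section AltCharSeries

variable {d : ℕ} (χ : DirichletCharacter ℂ d)

lemma norm_altChar_mul_pow_le (w : ℂ) (n : ℕ) : ‖χ n * (-1) ^ n * w ^ n‖ ≤ ‖w‖ ^ n := by
  rw [norm_mul, norm_mul, norm_pow, norm_neg, norm_one, one_pow, mul_one, norm_pow]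
  exact mul_le_of_le_one_left (by positivity) (χ.norm_le_one _)

lemma norm_altChar_le_one (n : ℕ) : ‖χ n * (-1) ^ n‖ ≤ 1 := by
  simpa using norm_altChar_mul_pow_le χ 1 n

lemma hasSum_altCharSeries (hd : Odd d) {w : ℂ} (hw : ‖w‖ < 1) :
    HasSum (fun n : ℕ => χ n * (-1) ^ n * w ^ n) (altCharSeries χ w) := by
  set f : ℕ → ℂ := fun n => χ n * (-1) ^ n * w ^ n
  have hf : Summable f := .of_norm_bounded (summable_geometric_of_lt_one (norm_nonneg w) hw)
    (norm_altChar_mul_pow_le χ w)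
  have hshift : ∀ n, f (n + d) = -w ^ d * f n := fun n => by
    simp only [f, Nat.cast_add, ZMod.natCast_self, add_zero, pow_add, hd.neg_one_pow]
    ring
  have hden : 1 + w ^ d ≠ 0 := fun h => by
    have : ‖w ^ d‖ < 1 := by rw [norm_pow]; exact pow_lt_one₀ (norm_nonneg w) hw hd.pos.ne'
    simp [eq_neg_of_add_eq_zero_right h] at this
  have key := hf.sum_add_tsum_nat_add d
  simp only [hshift, tsum_mul_left] at key
  convert hf.hasSum
  rw [altCharSeries, div_eq_iff hden]
  linear_combination key

lemma norm_altCharSeries_ofReal_le {w : ℝ} (hw0 : 0 ≤ w) (hw1 : w ≤ 1) :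
    ‖altCharSeries χ w‖ ≤ d := by
  have hden : 1 ≤ ‖1 + (w : ℂ) ^ d‖ := by
    rw [← Complex.ofReal_pow, ← Complex.ofReal_one, ← Complex.ofReal_add, Complex.norm_real,
      Real.norm_of_nonneg (by positivity)]
    linarith [pow_nonneg hw0 d]
  calc ‖altCharSeries χ w‖ ≤ ‖∑ a ∈ range d, χ a * (-1) ^ a * (w : ℂ) ^ a‖ := by
        rw [altCharSeries, norm_div]; exact div_le_self (norm_nonneg _) hden
    _ ≤ ∑ _a ∈ range d, (1 : ℝ) := norm_sum_le_of_le _ fun a _ =>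
        (norm_altChar_mul_pow_le χ _ a).trans
          (by simpa [abs_of_nonneg hw0] using pow_le_one₀ hw0 hw1)
    _ = d := by simp

lemma continuousAt_altCharSeries {w : ℂ} (hw : 1 + w ^ d ≠ 0) :
    ContinuousAt (altCharSeries χ) w := by
  unfold altCharSeries
  fun_prop (disch := exact hw)

end AltCharSeries

lemma modqEulerPoly_pow_natCast_div {q : ℝ} (hq : 0 ≤ q) {d : ℕ} (hd : d ≠ 0) (n a : ℕ) :
    modqEulerPoly (q ^ d) n (a / d) = (1 + q ^ d) * (1 / (1 - q ^ d)) ^ n *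
      ∑ l ∈ range (n + 1), (n.choose l : ℝ) * (-1) ^ l * (q ^ l) ^ a / (1 + (q ^ l) ^ d) := by
  unfold modqEulerPoly
  congr! 3 with l
  · rw [← Real.rpow_natCast q d, ← Real.rpow_mul hq, ← pow_mul, ← Real.rpow_natCast]
    congr 1
    field_simp
    norm_cast
  · ring

lemma modqEulerNumberChi_eq {q : ℝ} (hq0 : 0 ≤ q) (hq1 : q ≠ 1) {d : ℕ} (hd : d ≠ 0)
    (χ : DirichletCharacter ℂ d) (n : ℕ) :
    modqEulerNumberChi q d χ n = (1 + q) / (1 - q) ^ n *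
      ∑ l ∈ range (n + 1), n.choose l * (-1) ^ l * altCharSeries χ (q ^ l) := by
  have hq : 1 - (q : ℂ) ≠ 0 := sub_ne_zero.2 (by exact_mod_cast hq1.symm)
  have hqd : 1 - (q : ℂ) ^ d ≠ 0 := by
    norm_cast; exact sub_ne_zero.2 (Ne.symm ((pow_eq_one_iff_of_nonneg hq0 hd).not.2 hq1))
  have hqd' : 1 + (q : ℂ) ^ d ≠ 0 := by norm_cast; positivity
  have hK : ((1 - (q : ℂ) ^ d) / (1 - q)) ^ n * ((1 + q) / (1 + q ^ d)) *
      ((1 + q ^ d) * (1 / (1 - q ^ d)) ^ n) = (1 + q) / (1 - q) ^ n := by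
    rw [div_pow, one_div_pow]
    field_simp
  simp only [modqEulerNumberChi, modqEulerPoly_pow_natCast_div hq0 hd, altCharSeries]
  push_cast
  simp only [← mul_assoc, mul_sum, sum_div]
  rw [sum_comm, ← hK]
  exact sum_congr rfl fun l _ => sum_congr rfl fun a _ => by ring

lemma pow_div_factorial_mul_sum_choose {K : Type*} [Field K] [CharZero K] (x : K) (b : ℕ → K)
    (n : ℕ) : x ^ n / n ! * ∑ l ∈ range (n + 1), n.choose l * (-1) ^ l * b l =
      ∑ l ∈ range (n + 1), (-x) ^ l / l ! * b l * (x ^ (n - l) / (n - l)!) := by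
  rw [mul_sum]
  refine sum_congr rfl fun l hl => ?_
  have hln : l ≤ n := Nat.lt_succ_iff.mp (mem_range.mp hl)
  have := Nat.cast_ne_zero (R := K) |>.2 n.factorial_ne_zero
  rw [Nat.cast_choose K hln, neg_pow x, ← pow_sub_mul_pow x hln]
  field_simp

section ExpConvolution

variable (x : ℂ) {b : ℕ → ℂ} {C : ℝ}

lemma summable_norm_pow_div_factorial_mul (hb : ∀ l, ‖b l‖ ≤ C) :
    Summable fun l => ‖x ^ l / l ! * b l‖ :=
  .of_nonneg_of_le (fun _ => norm_nonneg _)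
    (fun l => by rw [norm_mul]; exact mul_le_mul_of_nonneg_left (hb l) (norm_nonneg _))
    ((NormedSpace.norm_expSeries_div_summable x).mul_right C)

lemma summable_norm_pow_div_factorial_mul_sum_choose (hb : ∀ l, ‖b l‖ ≤ C) :
    Summable fun n => ‖x ^ n / n ! * ∑ l ∈ range (n + 1), n.choose l * (-1) ^ l * b l‖ := by
  simp only [pow_div_factorial_mul_sum_choose]
  exact summable_norm_sum_mul_range_of_summable_norm (f := fun l => (-x) ^ l / l ! * b l)
    (g := fun j => x ^ j / j !) (summable_norm_pow_div_factorial_mul (-x) hb)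
    (NormedSpace.norm_expSeries_div_summable x)

lemma tsum_pow_div_factorial_mul_sum_choose (hb : ∀ l, ‖b l‖ ≤ C) :
    ∑' n, x ^ n / n ! * ∑ l ∈ range (n + 1), n.choose l * (-1) ^ l * b l =
      Complex.exp x * ∑' l, (-x) ^ l / l ! * b l := by
  simp only [pow_div_factorial_mul_sum_choose]
  rw [← tsum_mul_tsum_eq_tsum_sum_range_of_summable_norm (f := fun l => (-x) ^ l / l ! * b l)
    (g := fun j => x ^ j / j !) (summable_norm_pow_div_factorial_mul (-x) hb)
    (NormedSpace.norm_expSeries_div_summable x),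
    Complex.exp_eq_exp_ℂ, (NormedSpace.expSeries_div_hasSum_exp x).tsum_eq, mul_comm]

end ExpConvolution

section ExpSeries

variable {a : ℕ → ℂ} {C : ℝ} {z q : ℂ}

lemma summable_norm_mul_pow_mul_exp (ha : ∀ n, ‖a n‖ ≤ C) (hz : ‖z‖ < 1) (hq : ‖q‖ ≤ 1)
    (x : ℂ) : Summable fun n => ‖a n * z ^ n * Complex.exp (x * q ^ n)‖ := by
  have hC : 0 ≤ C := (norm_nonneg _).trans (ha 0)
  refine .of_nonneg_of_le (fun _ => norm_nonneg _) (fun n => ?_)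
    ((summable_geometric_of_lt_one (norm_nonneg z) hz).mul_left (C * Real.exp ‖x‖))
  have hexp : ‖Complex.exp (x * q ^ n)‖ ≤ Real.exp ‖x‖ :=
    (Complex.norm_exp_le_exp_norm _).trans <| Real.exp_le_exp.2 <| by
      rw [norm_mul, norm_pow]
      exact mul_le_of_le_one_right (norm_nonneg x) (pow_le_one₀ (norm_nonneg q) hq)
  rw [norm_mul, norm_mul, norm_pow]
  calc ‖a n‖ * ‖z‖ ^ n * ‖Complex.exp (x * q ^ n)‖ ≤ C * ‖z‖ ^ n * Real.exp ‖x‖ := by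
        gcongr; exact ha n
    _ = _ := by ring

lemma tsum_mul_pow_mul_exp (ha : ∀ n, ‖a n‖ ≤ C) (hz : ‖z‖ < 1) (hq : ‖q‖ ≤ 1) (x : ℂ) :
    ∑' n, a n * z ^ n * Complex.exp (x * q ^ n) =
      ∑' k, x ^ k / k ! * ∑' n, a n * (z * q ^ k) ^ n := by
  have hC : 0 ≤ C := (norm_nonneg _).trans (ha 0)
  set F : ℕ → ℕ → ℂ := fun n k => a n * z ^ n * ((x * q ^ n) ^ k / k !)
  have hF : Summable (Function.uncurry F) := by
    refine .of_norm_bounded ((summable_geometric_of_lt_one (norm_nonneg z) hz).mul_left C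
      |>.mul_of_nonneg (Real.summable_pow_div_factorial ‖x‖) (fun n => ?_) (fun k => by positivity))
      fun ⟨n, k⟩ => ?_
    · positivity
    · simp only [Function.uncurry, F, norm_mul, norm_div, norm_pow, Complex.norm_natCast]
      have : ‖q‖ ^ n ≤ 1 := pow_le_one₀ (norm_nonneg q) hq
      calc ‖a n‖ * ‖z‖ ^ n * ((‖x‖ * ‖q‖ ^ n) ^ k / k !)
          ≤ C * ‖z‖ ^ n * ((‖x‖ * 1) ^ k / k !) := by gcongr; exact ha n
        _ = _ := by ring
  calc ∑' n, a n * z ^ n * Complex.exp (x * q ^ n) = ∑' n, ∑' k, F n k := tsum_congr fun n => by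
        rw [Complex.exp_eq_exp_ℂ, ← (NormedSpace.expSeries_div_hasSum_exp (x * q ^ n)).tsum_eq,
          ← tsum_mul_left]
    _ = ∑' k, ∑' n, F n k :=
        (hF.tsum_comm' (fun n => hF.prod_factor n) (fun k => hF.prod_symm.prod_factor k)).symm
    _ = ∑' k, x ^ k / k ! * ∑' n, a n * (z * q ^ k) ^ n := tsum_congr fun k => by
        rw [← tsum_mul_left]
        exact tsum_congr fun n => by ring

end ExpSeries

lemma continuousOn_tsum_pow_div_factorial_mul_altCharSeries {d : ℕ} (χ : DirichletCharacter ℂ d)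
    {q : ℝ} (hq0 : 0 ≤ q) (hq1 : q ≤ 1) (x : ℂ) :
    ContinuousOn (fun z : ℝ => ∑' k, x ^ k / k ! * altCharSeries χ (z * q ^ k)) (Set.Icc 0 1) := by
  refine continuousOn_tsum (fun k z hz => ?_)
    ((NormedSpace.norm_expSeries_div_summable x).mul_right (d : ℝ)) (fun k z hz => ?_)
  · have hw : 1 + ((z : ℂ) * q ^ k) ^ d ≠ 0 := by
      norm_cast; have := hz.1; positivity
    exact continuousWithinAt_const.mul
      ((continuousAt_altCharSeries χ hw).comp_continuousWithinAt (f := fun z : ℝ => (z : ℂ) * q ^ k)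
        (by fun_prop))
  · have hw := norm_altCharSeries_ofReal_le χ (mul_nonneg hz.1 (pow_nonneg hq0 k))
      (mul_le_one₀ hz.2 (pow_nonneg hq0 k) (pow_le_one₀ hq0 hq1))
    push_cast at hw
    rw [norm_mul]
    gcongr

lemma modqEulerNumberChi_mul_pow_div_factorial {q : ℝ} (hq0 : 0 ≤ q) (hq1 : q ≠ 1) {d : ℕ}
    (hd : d ≠ 0) (χ : DirichletCharacter ℂ d) (t : ℂ) (n : ℕ) :
    modqEulerNumberChi q d χ n * t ^ n / n ! = (1 + q) * ((t / (1 - q)) ^ n / n ! *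
      ∑ l ∈ range (n + 1), n.choose l * (-1) ^ l * altCharSeries χ (q ^ l)) := by
  have hq : 1 - (q : ℂ) ≠ 0 := sub_ne_zero.2 (by exact_mod_cast hq1.symm)
  rw [modqEulerNumberChi_eq hq0 hq1 hd, div_pow]
  field_simp

lemma exp_qInt_mul {q : ℂ} (hq : q ≠ 1) (t : ℂ) (n : ℕ) :
    Complex.exp ((1 - q ^ n) / (1 - q) * t) =
      Complex.exp (t / (1 - q)) * Complex.exp (-(t / (1 - q)) * q ^ n) := by
  have : 1 - q ≠ 0 := sub_ne_zero.2 hq.symm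
  rw [← Complex.exp_add]
  congr 1
  field_simp
  ring

lemma tsum_altChar_mul_pow_mul_exp_qInt {d : ℕ} (χ : DirichletCharacter ℂ d) (hd : Odd d)
    {z q : ℂ} (hz : ‖z‖ < 1) (hq : ‖q‖ ≤ 1) (hq1 : q ≠ 1) (t : ℂ) :
    ∑' n : ℕ, χ n * (-1) ^ n * z ^ n * Complex.exp ((1 - q ^ n) / (1 - q) * t) =
      Complex.exp (t / (1 - q)) *
        ∑' k, (-(t / (1 - q))) ^ k / k ! * altCharSeries χ (z * q ^ k) := by
  have hzq (k : ℕ) : ‖z * q ^ k‖ < 1 := by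
    rw [norm_mul, norm_pow]
    exact mul_lt_one_of_nonneg_of_lt_one_left (norm_nonneg _) hz (pow_le_one₀ (norm_nonneg _) hq)
  simp only [exp_qInt_mul hq1, mul_left_comm _ (Complex.exp _), tsum_mul_left,
    tsum_mul_pow_mul_exp (norm_altChar_le_one χ) hz hq,
    fun k => (hasSum_altCharSeries χ hd (hzq k)).tsum_eq]

theorem modqEulerChi_generating_function_general (q t : ℝ) (hq0 : 0 < q) (hq1 : q < 1)
    (d : ℕ) (hdo : Odd d) (χ : DirichletCharacter ℂ d) :
    (Summable fun n : ℕ =>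
      ‖modqEulerNumberChi q d χ n * (t : ℂ) ^ n / (n.factorial : ℂ)‖) ∧
    (∀ z : ℝ, 0 ≤ z → z < 1 →
      Summable fun n : ℕ =>
        ‖χ (n : ZMod d) * (-1) ^ n * (z : ℂ) ^ n *
          ((Real.exp ((1 - q ^ n) / (1 - q) * t) : ℝ) : ℂ)‖) ∧
    Filter.Tendsto
      (fun z : ℝ =>
        ((1 + q : ℝ) : ℂ) * ∑' n : ℕ, χ (n : ZMod d) * (-1) ^ n * (z : ℂ) ^ n *
          ((Real.exp ((1 - q ^ n) / (1 - q) * t) : ℝ) : ℂ))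
      (nhdsWithin 1 (Set.Ico 0 1))
      (nhds (∑' n : ℕ, modqEulerNumberChi q d χ n * (t : ℂ) ^ n / (n.factorial : ℂ))) := by
  set c : ℂ := t / (1 - q)
  have hq : (q : ℂ) ≠ 1 := by exact_mod_cast hq1.ne
  have hqn : ‖(q : ℂ)‖ ≤ 1 := by rw [Complex.norm_real, Real.norm_of_nonneg hq0.le]; exact hq1.le
  have hz {z : ℝ} (hz0 : 0 ≤ z) (hz1 : z < 1) : ‖(z : ℂ)‖ < 1 := by
    rwa [Complex.norm_real, Real.norm_of_nonneg hz0]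
  have hΦ (l : ℕ) : ‖altCharSeries χ ((q : ℂ) ^ l)‖ ≤ d := by
    simpa using norm_altCharSeries_ofReal_le χ (pow_nonneg hq0.le l) (pow_le_one₀ hq0.le hq1.le)
  have hE := modqEulerNumberChi_mul_pow_div_factorial hq0.le hq1.ne hdo.pos.ne' χ t
  push_cast
  refine ⟨?_, fun z hz0 hz1 => ?_, ?_⟩
  · simp only [hE, norm_mul (1 + (q : ℂ))]
    exact (summable_norm_pow_div_factorial_mul_sum_choose c hΦ).mul_left _
  · simp only [exp_qInt_mul hq, mul_left_comm _ (Complex.exp _), norm_mul (Complex.exp _)]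
    exact (summable_norm_mul_pow_mul_exp (norm_altChar_le_one χ) (hz hz0 hz1) hqn _).mul_left _
  · have hlim := (continuousOn_tsum_pow_div_factorial_mul_altCharSeries χ hq0.le hq1.le (-c)
      1 ⟨zero_le_one, le_rfl⟩).mono Set.Ico_subset_Icc_self |>.tendsto
    simp only [Complex.ofReal_one, one_mul] at hlim
    rw [tsum_congr hE, tsum_mul_left, tsum_pow_div_factorial_mul_sum_choose c hΦ]
    refine ((hlim.const_mul _).const_mul _).congr' ?_
    filter_upwards [self_mem_nhdsWithin] with z ⟨hz0, hz1⟩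
    rw [tsum_altChar_mul_pow_mul_exp_qInt χ hdo (hz hz0 hz1) hqn hq]

/-- The generating function identity
`F_{χ,q}(t) = ∑_{n≥0} 𝓔_{n,χ,q} t^n/n! = [2]_q ∑_{n≥0} χ(n)(-1)^n e^{[n]_q t}`
in the Abel sense. -/
theorem modqEulerChi_generating_function (q t : ℝ) (hq0 : 0 < q) (hq1 : q < 1)
    (d : ℕ) (hd : 0 < d) (hdo : Odd d) (χ : DirichletCharacter ℂ d) :
    (Summable fun n : ℕ =>
      ‖modqEulerNumberChi q d χ n * (t : ℂ) ^ n / (n.factorial : ℂ)‖) ∧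
    (∀ z : ℝ, 0 ≤ z → z < 1 →
      Summable fun n : ℕ =>
        ‖χ (n : ZMod d) * (-1) ^ n * (z : ℂ) ^ n *
          ((Real.exp ((1 - q ^ n) / (1 - q) * t) : ℝ) : ℂ)‖) ∧
    Filter.Tendsto
      (fun z : ℝ =>
        ((1 + q : ℝ) : ℂ) * ∑' n : ℕ, χ (n : ZMod d) * (-1) ^ n * (z : ℂ) ^ n *
          ((Real.exp ((1 - q ^ n) / (1 - q) * t) : ℝ) : ℂ))
      (nhdsWithin 1 (Set.Ico 0 1))
      (nhds (∑' n : ℕ, modqEulerNumberChi q d χ n * (t : ℂ) ^ n / (n.factorial : ℂ))) :=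
  modqEulerChi_generating_function_general q t hq0 hq1 d hdo χ
end

section
/- Let q be a real number with 0 < q < 1, and let (β_k)_{k≥0} be the (unique) sequence of real numbers with β_0 = 1 and, for every k ≥ 1, q·∑_{l=0}^k C(k,l) q^l β_l − β_k = 1 if k = 1 and = 0 if k > 1. Define the Carlitz q-Bernoulli polynomials β_k(x) = ∑_{i=0}^k C(k,i) q^{ix} β_i [x]_q^{k−i}. Then for every positive integer n and every integer k ≥ 0: q^n β_k(n) − β_k = (q−1)·∑_{l=0}^{n−1} q^l [l]_q^k + k·∑_{l=0}^{n−1} q^{2l} [l]_q^{k−1} (with the conventions [0]_q^0 = 1 and that the second sum is 0 when k = 0). -/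
open Finset Polynomial

/-!
Write `β_k(x)` umbrally as `(q^x β + [x]_q)^k`, i.e. as the image of `(q^x X + [x]_q)^k` under the
linear functional `X^i ↦ β_i`. Since `q^(x+1) β + [x+1]_q = q^x (qβ + 1) + [x]_q`, the defining
recurrence `q(qβ + 1)^m = β_m + δ_{m,1}` (and `q(qβ+1)^0 = q = β_0 + (q - 1)`) gives
`q^(x+1) β_k(x+1) - q^x β_k(x) = q^x ((q - 1)[x]_q^k + k q^x [x]_q^(k-1))`;
summing from `x = 0`, where `β_k(0) = β_k`, gives the theorem.
-/

namespace Carlitz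

variable {R : Type*} [CommRing R]

/-- Umbral evaluation: `β^i` is read as `β i`. -/
noncomputable def umbral (β : ℕ → R) : R[X] →ₗ[R] R :=
  lsum fun i => LinearMap.toSpanSingleton R R (β i)

lemma umbral_C_mul_X_pow (β : ℕ → R) (a : R) (i : ℕ) : umbral β (C a * X ^ i) = a * β i := by
  rw [umbral, lsum_apply, C_mul_X_pow_eq_monomial, sum_monomial_index _ _ (by simp)]
  simp

lemma umbral_C_mul (β : ℕ → R) (a : R) (p : R[X]) : umbral β (C a * p) = a * umbral β p := by
  rw [← smul_eq_C_mul, map_smul, smul_eq_mul]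

lemma umbral_C_mul_X_add_C_pow (β : ℕ → R) (a b : R) (k : ℕ) :
    umbral β ((C a * X + C b) ^ k) =
      ∑ i ∈ range (k + 1), (k.choose i : R) * a ^ i * β i * b ^ (k - i) := by
  rw [add_pow, map_sum]
  refine sum_congr rfl fun i _ => ?_
  rw [show (C a * X) ^ i * C b ^ (k - i) * (k.choose i : R[X])
      = C ((k.choose i : R) * a ^ i * b ^ (k - i)) * X ^ i by
        simp only [map_mul, map_pow, map_natCast]; ring,
    umbral_C_mul_X_pow]
  ring

lemma umbral_X_pow (β : ℕ → R) (i : ℕ) : umbral β (X ^ i) = β i := by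
  simpa using umbral_C_mul_X_pow β 1 i

/-- The `q`-integer `[n]_q`, as a geometric sum so that no division is needed. -/
def qNat (q : R) (n : ℕ) : R := ∑ i ∈ range n, q ^ i

section Recurrence

variable {q : R} {β : ℕ → R} (h0 : β 0 = 1)
  (hrec : ∀ k : ℕ, 1 ≤ k →
    q * (∑ l ∈ range (k + 1), (k.choose l : R) * q ^ l * β l) - β k = if k = 1 then 1 else 0)
include h0 hrec

lemma mul_umbral_C_mul_X_add_one_pow (m : ℕ) :
    q * umbral β ((C q * X + C 1) ^ m) =
      β m + (if m = 0 then q - 1 else 0) + (if m = 1 then 1 else 0) := by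
  rw [umbral_C_mul_X_add_C_pow]
  rcases Nat.eq_zero_or_pos m with rfl | hm
  · simp [h0]
  · simp only [one_pow, mul_one, if_neg hm.ne']
    linear_combination hrec m hm

lemma mul_umbral_shift (y z : R) (k : ℕ) :
    q * umbral β ((C (q * y) * X + C (y + z)) ^ k) =
      umbral β ((C y * X + C z) ^ k) + (q - 1) * z ^ k + k * y * z ^ (k - 1) := by
  have hsplit : C (q * y) * X + C (y + z) = C y * (C q * X + C 1) + C z := by
    simp only [map_mul, map_add, map_one]; ring
  rw [hsplit, add_pow, map_sum, mul_sum]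
  have hterm : ∀ m ∈ range (k + 1),
      q * umbral β ((C y * (C q * X + C 1)) ^ m * C z ^ (k - m) * (k.choose m : R[X])) =
        (k.choose m : R) * y ^ m * z ^ (k - m) *
          (β m + (if m = 0 then q - 1 else 0) + (if m = 1 then 1 else 0)) := by
    intro m _
    rw [show (C y * (C q * X + C 1)) ^ m * C z ^ (k - m) * (k.choose m : R[X]) =
        C ((k.choose m : R) * y ^ m * z ^ (k - m)) * (C q * X + C 1) ^ m by
      rw [mul_pow, C_mul, C_mul, C_pow, C_pow, map_natCast]; ring,
      umbral_C_mul, mul_left_comm, mul_umbral_C_mul_X_add_one_pow h0 hrec]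
  rw [sum_congr rfl hterm, umbral_C_mul_X_add_C_pow]
  simp only [mul_add, sum_add_distrib, mul_ite, mul_zero, sum_ite_eq', mem_range]
  rw [if_pos k.succ_pos]
  rcases k with _ | k
  · simp
  · simp only [Nat.choose_zero_right, Nat.choose_one_right, Nat.sub_zero, pow_zero, pow_one,
      if_pos (by omega : 1 < k + 1 + 1), Nat.cast_add_one]
    rw [sum_congr rfl fun i _ => mul_right_comm _ (z ^ _) (β i)]
    ring

theorem pow_mul_umbral_sub_eq_sum (n k : ℕ) :
    q ^ n * umbral β ((C (q ^ n) * X + C (qNat q n)) ^ k) - β k =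
      ∑ l ∈ range n, q ^ l * ((q - 1) * qNat q l ^ k + k * q ^ l * qNat q l ^ (k - 1)) := by
  set P : ℕ → R := fun l => q ^ l * umbral β ((C (q ^ l) * X + C (qNat q l)) ^ k)
  have hP0 : P 0 = β k := by simp [P, qNat, umbral_X_pow]
  have hstep : ∀ l, P (l + 1) - P l =
      q ^ l * ((q - 1) * qNat q l ^ k + k * q ^ l * qNat q l ^ (k - 1)) := by
    intro l
    have hsucc : qNat q (l + 1) = q ^ l + qNat q l := by rw [qNat, sum_range_succ, qNat, add_comm]
    have hPsucc : P (l + 1) =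
        q ^ l * (q * umbral β ((C (q * q ^ l) * X + C (q ^ l + qNat q l)) ^ k)) := by
      simp only [P, pow_succ', hsucc]; ring
    rw [hPsucc, mul_umbral_shift h0 hrec]
    ring
  rw [← hP0, show q ^ n * umbral β ((C (q ^ n) * X + C (qNat q n)) ^ k) = P n from rfl,
    ← sum_range_sub]
  exact sum_congr rfl fun l _ => hstep l

end Recurrence

end Carlitz

open Finset Polynomial Carlitz in
theorem carlitz_qBernoulli_sum_general (q : ℝ) (hq1 : q < 1)
    (β : ℕ → ℝ) (h0 : β 0 = 1)
    (hrec : ∀ k : ℕ, 1 ≤ k →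
      q * (∑ l ∈ Finset.range (k + 1), (k.choose l : ℝ) * q ^ l * β l) - β k =
        if k = 1 then 1 else 0)
    (n : ℕ) (k : ℕ) :
    q ^ n * (∑ i ∈ Finset.range (k + 1),
        (k.choose i : ℝ) * q ^ (i * n) * β i * ((1 - q ^ n) / (1 - q)) ^ (k - i)) - β k =
      (q - 1) * (∑ l ∈ Finset.range n, q ^ l * ((1 - q ^ l) / (1 - q)) ^ k) +
        (k : ℝ) * ∑ l ∈ Finset.range n, q ^ (2 * l) * ((1 - q ^ l) / (1 - q)) ^ (k - 1) := by
  have hqNat : ∀ l, (1 - q ^ l) / (1 - q) = qNat q l := fun l => by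
    rw [qNat, geom_sum_eq hq1.ne, ← neg_sub, ← neg_sub q, neg_div_neg_eq]
  simp only [hqNat, pow_mul', ← umbral_C_mul_X_add_C_pow, pow_mul_umbral_sub_eq_sum h0 hrec,
    mul_sum, ← sum_add_distrib]
  exact sum_congr rfl fun l _ => by ring

/-- Carlitz's result (Proposition 2): if `(β_k)` are the Carlitz `q`-Bernoulli numbers,
determined by `β_0 = 1` and `q(qβ+1)^k - β_k = δ_{k,1}` for `k ≥ 1`, and
`β_k(x) = ∑_{i=0}^k C(k,i) q^{ix} β_i [x]_q^{k-i}` are the `q`-Bernoulli polynomials, then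
`q^n β_k(n) - β_k = (q-1) ∑_{l=0}^{n-1} q^l [l]_q^k + k ∑_{l=0}^{n-1} q^{2l} [l]_q^{k-1}`. -/
theorem carlitz_qBernoulli_sum (q : ℝ) (hq0 : 0 < q) (hq1 : q < 1)
    (β : ℕ → ℝ) (h0 : β 0 = 1)
    (hrec : ∀ k : ℕ, 1 ≤ k →
      q * (∑ l ∈ Finset.range (k + 1), (k.choose l : ℝ) * q ^ l * β l) - β k =
        if k = 1 then 1 else 0)
    (n : ℕ) (hn : 0 < n) (k : ℕ) :
    q ^ n * (∑ i ∈ Finset.range (k + 1),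
        (k.choose i : ℝ) * q ^ (i * n) * β i * ((1 - q ^ n) / (1 - q)) ^ (k - i)) - β k =
      (q - 1) * (∑ l ∈ Finset.range n, q ^ l * ((1 - q ^ l) / (1 - q)) ^ k) +
        (k : ℝ) * ∑ l ∈ Finset.range n, q ^ (2 * l) * ((1 - q ^ l) / (1 - q)) ^ (k - 1) :=
  carlitz_qBernoulli_sum_general q hq1 β h0 hrec n k
end

section
/- Let q be a real number with 0 < q < 1, and let (B_{k,q})_{k≥0} be the (unique) sequence of real numbers with B_{0,q} = (q−1)/log q and, for every k ≥ 1, ∑_{l=0}^k C(k,l) q^l B_{l,q} − B_{k,q} = 1 if k = 1 and = 0 if k > 1. Define the modified q-Bernoulli polynomials B_{k,q}(x) = ∑_{i=0}^k C(k,i) q^{ix} B_{i,q} [x]_q^{k−i}. Then for every positive integer n and every integer k ≥ 0: B_{k,q}(n) − B_{k,q} = k·∑_{l=0}^{n−1} q^l [l]_q^{k−1} (with the conventions [0]_q^0 = 1 and that the sum is 0 when k = 0). -/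
/-! In umbral notation `B_{k,q}(n) = (q^n B + [n]_q)^k`. As `[n+1]_q = q^n + [n]_q`, we get
`B_{k,q}(n+1) = (q^n (q B + 1) + [n]_q)^k`, and the recurrence `(q B + 1)^j = B^j + δ_{j,1}` turns
this into `B_{k,q}(n) + k q^n [n]_q^{k-1}`. Summing over `n` telescopes down to
`B_{k,q}(0) = B_{k,q}`. -/

open Finset

section Umbral

variable {R : Type*} [CommSemiring R]

/-- The umbral power `(x B + y)^k`, where `B^i` is read as `B i`. -/
def umbralPow (B : ℕ → R) (x y : R) (k : ℕ) : R :=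
  ∑ i ∈ range (k + 1), (k.choose i : R) * x ^ i * B i * y ^ (k - i)

theorem umbralPow_zero_right (B : ℕ → R) (x : R) (k : ℕ) :
    umbralPow B x 0 k = x ^ k * B k := by
  rw [umbralPow, sum_range_succ, sum_eq_zero fun i hi => by
    rw [zero_pow (Nat.sub_ne_zero_of_lt (mem_range.1 hi)), mul_zero]]
  simp

theorem umbralPow_add (B C : ℕ → R) (x y : R) (k : ℕ) :
    umbralPow (B + C) x y k = umbralPow B x y k + umbralPow C x y k := by
  simp only [umbralPow, Pi.add_apply, mul_add, add_mul, sum_add_distrib]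

theorem umbralPow_ite_one (x y : R) (k : ℕ) :
    umbralPow (fun i => if i = 1 then 1 else 0) x y k = k * x * y ^ (k - 1) := by
  rcases k with _ | k
  · simp [umbralPow]
  · simp [umbralPow, mul_ite, ite_mul, sum_ite_eq']

theorem umbralPow_umbralPow (B : ℕ → R) (x y z w : R) (k : ℕ) :
    umbralPow (umbralPow B x y) z w k = umbralPow B (z * x) (z * y + w) k := by
  set f : ℕ → ℕ → R := fun i j =>
    (k.choose i : R) * ((k - i).choose (j - i) : R) * (z * x) ^ i * B i * (z * y) ^ (j - i) *
      w ^ (k - j)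
  have expand_inner : ∀ j ∈ range (k + 1),
      (k.choose j : R) * z ^ j * umbralPow B x y j * w ^ (k - j) = ∑ i ∈ range (j + 1), f i j := by
    intro j hj
    rw [umbralPow, mul_sum, sum_mul]
    refine sum_congr rfl fun i hi => ?_
    have hij : i ≤ j := Nat.lt_succ_iff.1 (mem_range.1 hi)
    have hchoose : (k.choose j : R) * (j.choose i : R) = k.choose i * (k - i).choose (j - i) := by
      rw [← Nat.cast_mul, Nat.choose_mul hij, Nat.cast_mul]
    rw [show z ^ j = z ^ i * z ^ (j - i) by rw [← pow_add, Nat.add_sub_cancel' hij]]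
    calc _ = (k.choose j : R) * (j.choose i : R) *
          (z ^ i * x ^ i * B i * (z ^ (j - i) * y ^ (j - i)) * w ^ (k - j)) := by ring
      _ = f i j := by rw [hchoose]; simp only [f, mul_pow]; ring
  calc umbralPow (umbralPow B x y) z w k
      = ∑ j ∈ range (k + 1), ∑ i ∈ range (j + 1), f i j := sum_congr rfl expand_inner
    _ = ∑ i ∈ range (k + 1), ∑ m ∈ range (k - i + 1), f i (i + m) := by
      simp only [range_eq_Ico, ← sum_Ico_Ico_comm]
      refine sum_congr rfl fun i hi => ?_
      rw [sum_Ico_eq_sum_range, show k + 1 - i = k - i + 1 by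
        have := (mem_Ico.1 hi).2; omega, range_eq_Ico]
    _ = umbralPow B (z * x) (z * y + w) k := by
      refine sum_congr rfl fun i _ => ?_
      rw [add_pow, mul_sum]
      refine sum_congr rfl fun m _ => ?_
      simp only [f, Nat.add_sub_cancel_left, Nat.sub_add_eq]
      ring

end Umbral

section QBernoulli

variable {K : Type*} [Field K] {q : K}

def qInt (q : K) (n : ℕ) : K := (1 - q ^ n) / (1 - q)

theorem qInt_zero : qInt q 0 = 0 := by simp [qInt]

theorem qInt_succ (hq : q ≠ 1) (n : ℕ) : qInt q (n + 1) = q ^ n + qInt q n := by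
  have : 1 - q ≠ 0 := sub_ne_zero.2 hq.symm
  rw [qInt, qInt]
  field_simp
  ring

variable {B : ℕ → K}

theorem umbralPow_qInt_succ (hq : q ≠ 1)
    (hB : ∀ j, umbralPow B q 1 j = B j + if j = 1 then 1 else 0) (n k : ℕ) :
    umbralPow B (q ^ (n + 1)) (qInt q (n + 1)) k =
      umbralPow B (q ^ n) (qInt q n) k + k * q ^ n * qInt q n ^ (k - 1) := by
  have hB' : umbralPow B q 1 = B + fun j => if j = 1 then 1 else 0 := funext hB
  rw [pow_succ, qInt_succ hq, show q ^ n + qInt q n = q ^ n * 1 + qInt q n by rw [mul_one],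
    ← umbralPow_umbralPow, hB', umbralPow_add, umbralPow_ite_one]

theorem umbralPow_qInt_sub (hq : q ≠ 1)
    (hB : ∀ j, umbralPow B q 1 j = B j + if j = 1 then 1 else 0) (n k : ℕ) :
    umbralPow B (q ^ n) (qInt q n) k - B k = k * ∑ l ∈ range n, q ^ l * qInt q l ^ (k - 1) := by
  have h0 : umbralPow B (q ^ 0) (qInt q 0) k = B k := by
    rw [pow_zero, qInt_zero, umbralPow_zero_right, one_pow, one_mul]
  rw [← h0, ← sum_range_sub (fun m => umbralPow B (q ^ m) (qInt q m) k), mul_sum]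
  exact sum_congr rfl fun l _ => by rw [umbralPow_qInt_succ hq hB]; ring

end QBernoulli

theorem modified_qBernoulli_sum_general (q : ℝ) (hq1 : q < 1)
    (B : ℕ → ℝ)
    (hrec : ∀ k : ℕ, 1 ≤ k →
      (∑ l ∈ Finset.range (k + 1), (k.choose l : ℝ) * q ^ l * B l) - B k =
        if k = 1 then 1 else 0)
    (n : ℕ) (k : ℕ) :
    (∑ i ∈ Finset.range (k + 1),
        (k.choose i : ℝ) * q ^ (i * n) * B i * ((1 - q ^ n) / (1 - q)) ^ (k - i)) - B k =
      (k : ℝ) * ∑ l ∈ Finset.range n, q ^ l * ((1 - q ^ l) / (1 - q)) ^ (k - 1) := by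
  have hB : ∀ j, umbralPow B q 1 j = B j + if j = 1 then 1 else 0 := by
    intro j
    rcases Nat.eq_zero_or_pos j with rfl | hj
    · simp [umbralPow]
    · rw [← hrec j hj]
      simp [umbralPow]
  calc _ = umbralPow B (q ^ n) (qInt q n) k - B k := by
        simp only [umbralPow, qInt, ← pow_mul, Nat.mul_comm n]
    _ = _ := umbralPow_qInt_sub hq1.ne hB n k

/-- If `(B_{k,q})` are the modified `q`-Bernoulli numbers, determined by
`B_{0,q} = (q-1)/log q` and `(qB+1)^k - B_{k,q} = δ_{k,1}` for `k ≥ 1`, and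
`B_{k,q}(x) = ∑_{i=0}^k C(k,i) q^{ix} B_{i,q} [x]_q^{k-i}` are the modified `q`-Bernoulli
polynomials, then `B_{k,q}(n) - B_{k,q} = k ∑_{l=0}^{n-1} q^l [l]_q^{k-1}`. -/
theorem modified_qBernoulli_sum (q : ℝ) (hq0 : 0 < q) (hq1 : q < 1)
    (B : ℕ → ℝ) (h0 : B 0 = (q - 1) / Real.log q)
    (hrec : ∀ k : ℕ, 1 ≤ k →
      (∑ l ∈ Finset.range (k + 1), (k.choose l : ℝ) * q ^ l * B l) - B k =
        if k = 1 then 1 else 0)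
    (n : ℕ) (hn : 0 < n) (k : ℕ) :
    (∑ i ∈ Finset.range (k + 1),
        (k.choose i : ℝ) * q ^ (i * n) * B i * ((1 - q ^ n) / (1 - q)) ^ (k - i)) - B k =
      (k : ℝ) * ∑ l ∈ Finset.range n, q ^ l * ((1 - q ^ l) / (1 - q)) ^ (k - 1) :=
  modified_qBernoulli_sum_general q hq1 B hrec n k
end

section
/- Let q be a real number with 0 < q and q ≠ 1, let n be an odd positive integer, and let m ≥ 0 be an integer. Then [2]_q·∑_{l=0}^{n−1} (−1)^l q^l [l]_q^m = q^n E_{m,q}(n) + E_{m,q} (with the convention [0]_q^0 = 1). -/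
/-- Kim's `q`-Euler polynomials
`E_{m,q}(x) = [2]_q (1/(1-q))^m ∑_{l=0}^m C(m,l) (-1)^l q^{lx}/(1+q^{l+1})`
(here `q ^ ((l : ℝ) * x)` is the real power `rpow`). -/
noncomputable def kimqEulerPoly (q : ℝ) (m : ℕ) (x : ℝ) : ℝ :=
  (1 + q) * (1 / (1 - q)) ^ m *
    ∑ l ∈ Finset.range (m + 1),
      (m.choose l : ℝ) * (-1) ^ l * q ^ ((l : ℝ) * x) / (1 + q ^ (l + 1))

/-- Lemma 4 (odd case): for odd positive `n`,
`[2]_q ∑_{l=0}^{n-1} (-1)^l q^l [l]_q^m = q^n E_{m,q}(n) + E_{m,q}`. -/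
theorem kimqEuler_odd_sum (q : ℝ) (hq0 : 0 < q) (hq1 : q ≠ 1)
    (n : ℕ) (hn : 0 < n) (hno : Odd n) (m : ℕ) :
    (1 + q) * ∑ l ∈ Finset.range n, (-1) ^ l * q ^ l * ((1 - q ^ l) / (1 - q)) ^ m =
      q ^ n * kimqEulerPoly q m (n : ℝ) + kimqEulerPoly q m 0 := by
  have hpow : ∀ j : ℕ, (0:ℝ) < 1 + q ^ (j + 1) := fun j => by positivity
  have hpow' : ∀ j : ℕ, (1:ℝ) + q ^ (j + 1) ≠ 0 := fun j => ne_of_gt (hpow j)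
  -- common expression
  set A : ℝ := (1 + q) * (1 / (1 - q)) ^ m *
      ∑ j ∈ Finset.range (m + 1),
        (m.choose j : ℝ) * (-1) ^ j * (q ^ ((j + 1) * n) + 1) / (1 + q ^ (j + 1)) with hA
  have hL : (1 + q) * ∑ l ∈ Finset.range n,
      (-1) ^ l * q ^ l * ((1 - q ^ l) / (1 - q)) ^ m = A := by
    have hbin : ∀ l : ℕ, ((1 - q ^ l) / (1 - q)) ^ m =
        (1 / (1 - q)) ^ m * ∑ j ∈ Finset.range (m + 1),
          (m.choose j : ℝ) * (-1) ^ j * (q ^ l) ^ j := by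
      intro l
      have hnum : (1 - q ^ l) ^ m = ∑ j ∈ Finset.range (m + 1),
          (m.choose j : ℝ) * (-1) ^ j * (q ^ l) ^ j := by
        have := add_pow (-(q ^ l)) 1 m
        simp only [one_pow, mul_one] at this
        rw [show (1 : ℝ) - q ^ l = -(q ^ l) + 1 by ring, this]
        refine Finset.sum_congr rfl fun j _ => ?_
        rw [neg_pow]
        ring
      rw [div_pow, hnum, one_div, inv_pow]
      ring
    calc (1 + q) * ∑ l ∈ Finset.range n, (-1) ^ l * q ^ l * ((1 - q ^ l) / (1 - q)) ^ m
        = (1 + q) * (1 / (1 - q)) ^ m * ∑ j ∈ Finset.range (m + 1),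
            (m.choose j : ℝ) * (-1) ^ j * ∑ l ∈ Finset.range n, (-(q ^ (j + 1))) ^ l := by
          simp only [hbin, Finset.mul_sum, Finset.sum_mul]
          rw [Finset.sum_comm]
          refine Finset.sum_congr rfl fun j _ => ?_
          refine Finset.sum_congr rfl fun l _ => ?_
          rw [neg_pow (q ^ (j + 1)), ← pow_mul, ← pow_mul,
            show (j + 1) * l = l + l * j by ring, pow_add]
          ring
      _ = A := by
          rw [hA]
          congr 1
          refine Finset.sum_congr rfl fun j _ => ?_
          have hqp := pow_pos hq0 (j + 1)
          have hr : (-(q ^ (j + 1)) : ℝ) ≠ 1 := by nlinarith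
          have hne : (-(q ^ (j + 1)) - 1 : ℝ) ≠ 0 := by nlinarith
          rw [geom_sum_eq hr, hno.neg_pow, ← pow_mul]
          have key : (-q ^ ((j + 1) * n) - 1) / (-q ^ (j + 1) - 1) =
              (q ^ ((j + 1) * n) + 1) / (1 + q ^ (j + 1)) := by
            rw [div_eq_div_iff hne (hpow' j)]; ring
          rw [key, mul_div_assoc]
  rw [hL, kimqEulerPoly, kimqEulerPoly, hA]
  have hrw : ∀ j : ℕ, j ∈ Finset.range (m + 1) →
      (m.choose j : ℝ) * (-1) ^ j * q ^ ((j : ℝ) * (n : ℝ)) / (1 + q ^ (j + 1)) =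
      (m.choose j : ℝ) * (-1) ^ j * q ^ (j * n) / (1 + q ^ (j + 1)) := by
    intro j _
    rw [show (j : ℝ) * (n : ℝ) = ((j * n : ℕ) : ℝ) by push_cast; ring,
      Real.rpow_natCast]
  rw [Finset.sum_congr rfl hrw]
  simp only [mul_zero, Real.rpow_zero]
  simp only [Finset.mul_sum]
  rw [← Finset.sum_add_distrib]
  refine Finset.sum_congr rfl fun j _ => ?_
  have hjn : q ^ ((j + 1) * n) = q ^ n * q ^ (j * n) := by
    rw [← pow_add]; ring_nf
  rw [hjn]
  field_simp
end

section
/- Let q be a real number with 0 < q and q ≠ 1, let n be an even positive integer, and let m ≥ 0 be an integer. Then q^n E_{m,q}(n) − E_{m,q} = [2]_q·∑_{l=0}^{n−1} (−1)^{l−1} q^l [l]_q^m (with the convention [0]_q^0 = 1). -/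
/-!
At `x = n` the factor `q ^ n` combines with `q ^ (l n)` into `(q ^ (l + 1)) ^ n`, so the `l`-th
summand of `q ^ n E_{m,q}(n) - E_{m,q}` carries `((q ^ (l + 1)) ^ n - 1) / (1 + q ^ (l + 1))`.
For even `n` this quotient is the alternating geometric sum `∑_{j < n} (-1) ^ (j + 1) q ^ ((l + 1) j)`
(its denominator is positive as `q > 0`). Exchanging the two sums, the binomial theorem collapses
the sum over `l` to `q ^ j (1 - q ^ j) ^ m`, which the prefactor `(1 - q) ^ (-m)` turns into
`q ^ j [j]_q ^ m`.
-/

open Finset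

theorem sum_range_choose_mul_neg_one_pow_mul_pow {R : Type*} [CommRing R] (x : R) (m : ℕ) :
    ∑ l ∈ range (m + 1), (m.choose l : R) * (-1) ^ l * x ^ l = (1 - x) ^ m := by
  rw [show 1 - x = -x + 1 by ring, add_pow]
  refine sum_congr rfl fun l _ => ?_
  rw [neg_pow, one_pow]
  ring

theorem sum_range_choose_mul_sum_range_neg_one_pow_succ_mul_pow {R : Type*} [CommRing R]
    (q : R) (m n : ℕ) :
    ∑ l ∈ range (m + 1), (m.choose l : R) * (-1) ^ l *
        ∑ j ∈ range n, (-1) ^ (j + 1) * (q ^ (l + 1)) ^ j =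
      ∑ j ∈ range n, (-1) ^ (j + 1) * q ^ j * (1 - q ^ j) ^ m := by
  simp_rw [mul_sum]
  rw [sum_comm]
  refine sum_congr rfl fun j _ => ?_
  rw [← sum_range_choose_mul_neg_one_pow_mul_pow, mul_sum]
  refine sum_congr rfl fun l _ => ?_
  ring

theorem pow_sub_one_div_one_add_of_even {K : Type*} [Field K] {n : ℕ} (hn : Even n) {t : K}
    (ht : 1 + t ≠ 0) :
    (t ^ n - 1) / (1 + t) = ∑ j ∈ range n, (-1) ^ (j + 1) * t ^ j := by
  have hgeom := geom_sum_mul_neg (-t) n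
  rw [hn.neg_pow, sub_neg_eq_add] at hgeom
  have hsign : ∑ j ∈ range n, (-1) ^ (j + 1) * t ^ j = -∑ j ∈ range n, (-t) ^ j := by
    rw [← sum_neg_distrib]
    refine sum_congr rfl fun j _ => ?_
    rw [neg_pow]
    ring
  rw [div_eq_iff ht, hsign]
  linear_combination hgeom

theorem pow_mul_kimqEulerPoly_natCast_sub_kimqEulerPoly_zero (q : ℝ) (m n : ℕ) :
    q ^ n * kimqEulerPoly q m n - kimqEulerPoly q m 0 =
      (1 + q) * (1 / (1 - q)) ^ m *
        ∑ l ∈ range (m + 1),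
          (m.choose l : ℝ) * (-1) ^ l * (((q ^ (l + 1)) ^ n - 1) / (1 + q ^ (l + 1))) := by
  have hpow : ∀ l : ℕ, q ^ ((l : ℝ) * n) = q ^ (l * n) := fun l => by
    exact_mod_cast Real.rpow_natCast q (l * n)
  simp only [kimqEulerPoly, hpow, mul_zero, Real.rpow_zero, mul_sum, ← sum_sub_distrib]
  refine sum_congr rfl fun l _ => ?_
  rw [← pow_mul, show (l + 1) * n = n + l * n by ring, pow_add]
  ring

theorem kimqEuler_even_sum_general (q : ℝ) (hq0 : 0 < q)
    (n : ℕ) (hne : Even n) (m : ℕ) :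
    q ^ n * kimqEulerPoly q m (n : ℝ) - kimqEulerPoly q m 0 =
      (1 + q) * ∑ l ∈ Finset.range n, (-1) ^ (l + 1) * q ^ l * ((1 - q ^ l) / (1 - q)) ^ m := by
  have hgeom : ∀ l : ℕ, ((q ^ (l + 1)) ^ n - 1) / (1 + q ^ (l + 1)) =
      ∑ j ∈ range n, (-1 : ℝ) ^ (j + 1) * (q ^ (l + 1)) ^ j :=
    fun l => pow_sub_one_div_one_add_of_even hne (by positivity)
  rw [pow_mul_kimqEulerPoly_natCast_sub_kimqEulerPoly_zero]
  simp only [hgeom]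
  rw [sum_range_choose_mul_sum_range_neg_one_pow_succ_mul_pow, mul_assoc, mul_sum]
  congr 1
  refine sum_congr rfl fun j _ => ?_
  rw [div_eq_mul_one_div (1 - q ^ j), mul_pow]
  ring

/-- Lemma 4 (even case): for even positive `n`,
`q^n E_{m,q}(n) - E_{m,q} = [2]_q ∑_{l=0}^{n-1} (-1)^{l-1} q^l [l]_q^m`
(with `(-1)^{l-1}` written as `(-1)^{l+1}`, to which it is equal). -/
theorem kimqEuler_even_sum (q : ℝ) (hq0 : 0 < q) (hq1 : q ≠ 1)
    (n : ℕ) (hn : 0 < n) (hne : Even n) (m : ℕ) :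
    q ^ n * kimqEulerPoly q m (n : ℝ) - kimqEulerPoly q m 0 =
      (1 + q) * ∑ l ∈ Finset.range n, (-1) ^ (l + 1) * q ^ l * ((1 - q ^ l) / (1 - q)) ^ m :=
  kimqEuler_even_sum_general q hq0 n hne m
end

section
/- Let p be an odd prime and let q ∈ ℚ_p satisfy |q−1|_p < 1. For every continuous function f : ℤ_p → ℚ_p, the sequence N ↦ ((1+q)/(1+q^{p^N})) ∑_{x=0}^{p^N−1} (−q)^x f(x) converges in ℚ_p to a limit I_{−q}(f); moreover, writing f₁(x) = f(x+1), one has q·I_{−q}(f₁) + I_{−q}(f) = [2]_q·f(0), where [2]_q = 1+q. -/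
/-!
Write `T_N(g) = ∑_{x < p^N} (-q)^x g(x)`. Splitting `x = j p^N + i` and using that `p^N` is odd,
`T_{N+1}(g) - T_N(g)` is a sum of terms `± (-q)^i ((q^{p^N})^j g(j p^N + i) - g(i))`, which are
uniformly small for large `N`: `q^{p^N} → 1`, since raising to the `p`-th power contracts `q`
towards `1`, and `g` is uniformly continuous on the compact `ℤ_p`. By the ultrametric inequality
`T_N(g)` is then Cauchy, while the normalising factor `(1 + q) / (1 + q^{p^N})` tends to
`(1 + q) / 2`. Finally `q T_N(f₁) + T_N(f)` telescopes to `f(0) + q^{p^N} f(p^N) → 2 f(0)`.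
-/

open Finset Filter Topology

section Ultrametric

variable {K : Type*} [NormedCommRing K] [NormOneClass K] [IsUltrametricDist K]

lemma norm_le_one_of_norm_sub_one_le_one {q : K} (hq : ‖q - 1‖ ≤ 1) : ‖q‖ ≤ 1 := by
  simpa using (IsUltrametricDist.norm_add_one_le_max_norm_one (q - 1)).trans (max_le hq le_rfl)

lemma norm_pow_sub_one_le {q : K} (hq : ‖q‖ ≤ 1) (m : ℕ) : ‖q ^ m - 1‖ ≤ ‖q - 1‖ := by
  have hgeom : ‖∑ i ∈ range m, q ^ i‖ ≤ 1 :=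
    IsUltrametricDist.norm_sum_le_of_forall_le_of_nonneg zero_le_one
      fun i _ => (norm_pow_le q i).trans (pow_le_one₀ (norm_nonneg q) hq)
  rw [← geom_sum_mul]
  exact (norm_mul_le _ _).trans (mul_le_of_le_one_left (norm_nonneg _) hgeom)

/-- Writing `∑_{i<p} q^i = p + ∑_{i<p} (q^i - 1)` shows that raising to the `p`-th power
contracts `q` towards `1` by the factor `max ‖q - 1‖ ‖p‖`. -/
lemma norm_pow_sub_one_le_mul_max (p : ℕ) {q : K} (hq : ‖q - 1‖ ≤ 1) :
    ‖q ^ p - 1‖ ≤ ‖q - 1‖ * max ‖q - 1‖ ‖(p : K)‖ := by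
  have hsplit : ∑ i ∈ range p, q ^ i = ∑ i ∈ range p, (q ^ i - 1) + p := by
    simp [sum_sub_distrib]
  have hgeom : ‖∑ i ∈ range p, q ^ i‖ ≤ max ‖q - 1‖ ‖(p : K)‖ := by
    rw [hsplit]
    refine (IsUltrametricDist.norm_add_le_max _ _).trans (max_le_max_right _ ?_)
    exact IsUltrametricDist.norm_sum_le_of_forall_le_of_nonneg (norm_nonneg _)
      fun i _ => norm_pow_sub_one_le (norm_le_one_of_norm_sub_one_le_one hq) i
  rw [← geom_sum_mul, mul_comm]
  exact (norm_mul_le _ _).trans (mul_le_mul_of_nonneg_left hgeom (norm_nonneg _))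

lemma norm_pow_pow_sub_one_le (p : ℕ) {q : K} (hq : ‖q - 1‖ ≤ 1) (N : ℕ) :
    ‖q ^ p ^ N - 1‖ ≤ max ‖q - 1‖ ‖(p : K)‖ ^ N * ‖q - 1‖ := by
  induction N with
  | zero => simp
  | succ N ih =>
    have hle : ‖q ^ p ^ N - 1‖ ≤ ‖q - 1‖ :=
      norm_pow_sub_one_le (norm_le_one_of_norm_sub_one_le_one hq) _
    calc ‖q ^ p ^ (N + 1) - 1‖ = ‖(q ^ p ^ N) ^ p - 1‖ := by rw [← pow_mul, pow_succ]
      _ ≤ ‖q ^ p ^ N - 1‖ * max ‖q ^ p ^ N - 1‖ ‖(p : K)‖ :=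
        norm_pow_sub_one_le_mul_max p (hle.trans hq)
      _ ≤ (max ‖q - 1‖ ‖(p : K)‖ ^ N * ‖q - 1‖) * max ‖q - 1‖ ‖(p : K)‖ := by
        gcongr
      _ = max ‖q - 1‖ ‖(p : K)‖ ^ (N + 1) * ‖q - 1‖ := by ring

lemma tendsto_pow_pow_nhds_one {p : ℕ} (hp : ‖(p : K)‖ < 1) {q : K} (hq : ‖q - 1‖ < 1) :
    Tendsto (fun N ↦ q ^ p ^ N) atTop (𝓝 1) := by
  rw [tendsto_iff_norm_sub_tendsto_zero]
  have hc : Tendsto (fun N ↦ max ‖q - 1‖ ‖(p : K)‖ ^ N * ‖q - 1‖) atTop (𝓝 0) := by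
    simpa using (tendsto_pow_atTop_nhds_zero_of_lt_one (by positivity) (max_lt hq hp)).mul_const
      ‖q - 1‖
  exact squeeze_zero (fun _ ↦ norm_nonneg _) (norm_pow_pow_sub_one_le p hq.le) hc

lemma norm_pow_mul_sub_le {a : K} (ha : ‖a‖ ≤ 1) (j : ℕ) (x y : K) :
    ‖a ^ j * x - y‖ ≤ max (‖a - 1‖ * ‖x‖) ‖x - y‖ := by
  have hsplit : a ^ j * x - y = (a ^ j - 1) * x + (x - y) := by ring
  rw [hsplit]
  refine (IsUltrametricDist.norm_add_le_max _ _).trans (max_le_max_right _ ?_)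
  exact (norm_mul_le _ _).trans (mul_le_mul_of_nonneg_right (norm_pow_sub_one_le ha j)
    (norm_nonneg _))

end Ultrametric

lemma Finset.sum_range_mul_eq_sum_sum {M : Type*} [AddCommMonoid M] (f : ℕ → M) (m n : ℕ) :
    ∑ x ∈ range (m * n), f x = ∑ j ∈ range m, ∑ i ∈ range n, f (j * n + i) := by
  induction m with
  | zero => simp
  | succ m ih => rw [Nat.succ_mul, sum_range_add, ih, sum_range_succ]

lemma PadicInt.tendsto_p_pow_nhds_zero (p : ℕ) [Fact p.Prime] :
    Tendsto (fun N ↦ (p : ℤ_[p]) ^ N) atTop (𝓝 0) :=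
  tendsto_pow_atTop_nhds_zero_of_norm_lt_one (Padic.norm_p_lt_one : ‖(p : ℤ_[p])‖ < 1)

section FermionicSum

variable {K : Type*}

/-- `I_{-q}(g)` is the limit of `(1 + q) / (1 + q^{p^N})` times this sum. -/
noncomputable def fermionicSum [CommRing K] (p : ℕ) [Fact p.Prime] (q : K) (g : ℤ_[p] → K)
    (N : ℕ) : K :=
  ∑ x ∈ range (p ^ N), (-q) ^ x * g x

variable {p : ℕ} [Fact p.Prime]

/-- Splitting `x < p^{N+1}` as `x = j p^N + i`, and using `∑_{j<p} (-1)^j = 1` for odd `p`. -/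
lemma fermionicSum_succ_sub [CommRing K] (hp : Odd p) (q : K) (g : ℤ_[p] → K) (N : ℕ) :
    fermionicSum p q g (N + 1) - fermionicSum p q g N =
      ∑ j ∈ range p, ∑ i ∈ range (p ^ N),
        (-1) ^ j * (-q) ^ i * ((q ^ p ^ N) ^ j * g ↑(j * p ^ N + i) - g i) := by
  have hsucc : fermionicSum p q g (N + 1) =
      ∑ j ∈ range p, ∑ i ∈ range (p ^ N), (-q) ^ (j * p ^ N + i) * g ↑(j * p ^ N + i) := by
    rw [fermionicSum, pow_succ', sum_range_mul_eq_sum_sum]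
  have hN : fermionicSum p q g N = ∑ j ∈ range p, (-1) ^ j * fermionicSum p q g N := by
    rw [← sum_mul, neg_one_geom_sum, if_neg (Nat.not_even_iff_odd.mpr hp), one_mul]
  rw [hsucc, hN, ← sum_sub_distrib]
  refine sum_congr rfl fun j _ ↦ ?_
  rw [fermionicSum, mul_sum, ← sum_sub_distrib]
  refine sum_congr rfl fun i _ ↦ ?_
  rw [pow_add, mul_comm j, pow_mul, (hp.pow (n := N)).neg_pow, neg_pow]
  ring

lemma fermionicSum_shift [CommRing K] (hp : Odd p) (q : K) (g : ℤ_[p] → K) (N : ℕ) :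
    q * fermionicSum p q (fun z ↦ g (z + 1)) N + fermionicSum p q g N =
      g 0 + q ^ p ^ N * g ((p : ℤ_[p]) ^ N) := by
  have htel := sum_range_sub' (fun x : ℕ ↦ (-q) ^ x * g x) (p ^ N)
  rw [(hp.pow (n := N)).neg_pow] at htel
  simp only [fermionicSum, mul_sum, ← sum_add_distrib]
  push_cast at htel ⊢
  rw [pow_zero, one_mul, neg_mul, sub_neg_eq_add] at htel
  rw [← htel]
  refine sum_congr rfl fun x _ ↦ ?_
  ring

variable [NormedCommRing K] [NormOneClass K] [IsUltrametricDist K]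

lemma norm_fermionicSum_succ_sub_le (hp : Odd p) {q : K} (hq : ‖q‖ ≤ 1) {g : ℤ_[p] → K}
    {N : ℕ} {ε : ℝ} (hε : 0 ≤ ε)
    (hg : ∀ j i : ℕ, ‖(q ^ p ^ N) ^ j * g ↑(j * p ^ N + i) - g i‖ ≤ ε) :
    ‖fermionicSum p q g (N + 1) - fermionicSum p q g N‖ ≤ ε := by
  rw [fermionicSum_succ_sub hp]
  refine IsUltrametricDist.norm_sum_le_of_forall_le_of_nonneg hε fun j _ ↦ ?_
  refine IsUltrametricDist.norm_sum_le_of_forall_le_of_nonneg hε fun i _ ↦ ?_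
  have hunit : ‖(-1 : K) ^ j * (-q) ^ i‖ ≤ 1 := by
    refine (norm_mul_le _ _).trans (mul_le_one₀ ?_ (norm_nonneg _) ?_) <;>
      refine (norm_pow_le _ _).trans (pow_le_one₀ (norm_nonneg _) ?_) <;> simp [hq]
  exact (norm_mul_le _ _).trans (mul_le_of_le_one_left (norm_nonneg _) hunit |>.trans (hg j i))

lemma cauchySeq_fermionicSum (hp : Odd p) (hpK : ‖(p : K)‖ < 1) {q : K} (hq : ‖q - 1‖ < 1)
    {g : ℤ_[p] → K} (hg : Continuous g) :
    CauchySeq (fermionicSum p q g) := by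
  have hq₁ : ‖q‖ ≤ 1 := norm_le_one_of_norm_sub_one_le_one hq.le
  refine NonarchimedeanAddGroup.cauchySeq_of_tendsto_sub_nhds_zero ?_
  rw [Metric.nhds_basis_closedBall.tendsto_right_iff]
  intro ε hε
  obtain ⟨C, hC⟩ : ∃ C, ∀ z, ‖g z‖ ≤ C := by
    obtain ⟨z₀, -, hz₀⟩ := isCompact_univ.exists_isMaxOn Set.univ_nonempty hg.norm.continuousOn
    exact ⟨‖g z₀‖, fun z ↦ hz₀ (Set.mem_univ z)⟩
  obtain ⟨δ, hδ, hgδ⟩ :=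
    Metric.uniformContinuous_iff.mp (CompactSpace.uniformContinuous_of_continuous hg) ε hε
  have hqN : ∀ᶠ N in atTop, ‖q ^ p ^ N - 1‖ * C ≤ ε := by
    have := ((tendsto_pow_pow_nhds_one hpK hq).sub_const 1).norm.mul_const C
    rw [sub_self, norm_zero, zero_mul] at this
    exact this.eventually (ge_mem_nhds hε)
  have hpN : ∀ᶠ N in atTop, ‖(p : ℤ_[p]) ^ N‖ < δ := by
    have := (PadicInt.tendsto_p_pow_nhds_zero p).norm
    rw [norm_zero] at this
    exact this.eventually (gt_mem_nhds hδ)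
  filter_upwards [hqN, hpN] with N hqN hpN
  rw [mem_closedBall_zero_iff]
  refine norm_fermionicSum_succ_sub_le hp hq₁ hε.le fun j i ↦ ?_
  refine (norm_pow_mul_sub_le (norm_le_one_of_norm_sub_one_le_one
    ((norm_pow_sub_one_le hq₁ _).trans hq.le)) j _ _).trans (max_le ?_ ?_)
  · exact (mul_le_mul_of_nonneg_left (hC _) (norm_nonneg _)).trans hqN
  · have hdist : dist (↑(j * p ^ N + i) : ℤ_[p]) i < δ := by
      rw [dist_eq_norm]
      push_cast
      rw [add_sub_cancel_right, norm_mul]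
      exact (mul_le_of_le_one_left (norm_nonneg _) (PadicInt.norm_le_one _)).trans_lt hpN
    exact (dist_eq_norm (g _) (g _) ▸ hgδ hdist).le

end FermionicSum

/-- The fermionic `p`-adic `q`-integral relation: for `q ∈ ℚ_p` with `|q-1|_p < 1` and `f`
continuous on `ℤ_p`, the Riemann sums `((1+q)/(1+q^{p^N})) ∑_{x<p^N} (-q)^x f(x)` converge
(both for `f₁(x) = f(x+1)` and for `f`), and the limits satisfy
`q I_{-q}(f₁) + I_{-q}(f) = [2]_q f(0)`. -/
theorem fermionic_integral_relation (p : ℕ) [Fact (Nat.Prime p)] (hp : Odd p)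
    (q : ℚ_[p]) (hq : ‖q - 1‖ < 1) (f : ℤ_[p] → ℚ_[p]) (hf : Continuous f) :
    ∃ I₁ I₀ : ℚ_[p],
      Filter.Tendsto
        (fun N : ℕ => ((1 + q) / (1 + q ^ p ^ N)) *
          ∑ x ∈ Finset.range (p ^ N), (-q) ^ x * f ((x : ℤ_[p]) + 1))
        Filter.atTop (nhds I₁) ∧
      Filter.Tendsto
        (fun N : ℕ => ((1 + q) / (1 + q ^ p ^ N)) *
          ∑ x ∈ Finset.range (p ^ N), (-q) ^ x * f (x : ℤ_[p]))
        Filter.atTop (nhds I₀) ∧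
      q * I₁ + I₀ = (1 + q) * f 0 := by
  obtain ⟨T₁, hT₁⟩ := cauchySeq_tendsto_of_complete
    (cauchySeq_fermionicSum hp Padic.norm_p_lt_one hq (hf.comp (continuous_add_const 1)))
  obtain ⟨T₀, hT₀⟩ := cauchySeq_tendsto_of_complete
    (cauchySeq_fermionicSum hp Padic.norm_p_lt_one hq hf)
  have hqN := tendsto_pow_pow_nhds_one Padic.norm_p_lt_one hq
  have hscale : Tendsto (fun N ↦ (1 + q) / (1 + q ^ p ^ N)) atTop (𝓝 ((1 + q) / 2)) := by
    rw [← one_add_one_eq_two]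
    exact tendsto_const_nhds.div (hqN.const_add 1) (by norm_num)
  refine ⟨(1 + q) / 2 * T₁, (1 + q) / 2 * T₀, hscale.mul hT₁, hscale.mul hT₀, ?_⟩
  have hshift : Tendsto (fun N ↦ f 0 + q ^ p ^ N * f ((p : ℤ_[p]) ^ N)) atTop
      (𝓝 (f 0 + 1 * f 0)) :=
    tendsto_const_nhds.add (hqN.mul ((hf.tendsto 0).comp (PadicInt.tendsto_p_pow_nhds_zero p)))
  simp_rw [← fermionicSum_shift hp] at hshift
  have hrel : q * T₁ + T₀ = 2 * f 0 := by
    rw [tendsto_nhds_unique ((hT₁.const_mul q).add hT₀) hshift]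
    ring
  linear_combination (1 + q) / 2 * hrel
end

section
/- Let p be an odd prime, let q ∈ ℚ_p satisfy |q−1|_p < 1 and q ≠ 1, and let n ≥ 0 be an integer. Then the sequence N ↦ ((1+q)/(1+q^{p^N})) ∑_{x=0}^{p^N−1} (−1)^x [x]_q^n converges in ℚ_p, and its limit equals [2]_q (1/(1−q))^n ∑_{l=0}^n C(n,l) (−1)^l/(1+q^l). (That is, the modified q-Euler number 𝓔_{n,q} = ∫_{ℤ_p} q^{−x}[x]_q^n dμ_{−q}(x) admits the stated explicit formula; note 1+q^l ≠ 0 since |q^l+1|_p = |2|_p = 1.) -/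
open Filter Finset

private lemma aux_pow_sub_one_norm_le {p : ℕ} [Fact (Nat.Prime p)] {x : ℚ_[p]}
    (hx : ‖x‖ ≤ 1) (m : ℕ) : ‖x ^ m - 1‖ ≤ ‖x - 1‖ := by
  rw [← geom_sum_mul, norm_mul]
  have h1 : ‖∑ i ∈ Finset.range m, x ^ i‖ ≤ 1 :=
    IsUltrametricDist.norm_sum_le_of_forall_le_of_nonneg zero_le_one
      (fun i _ => by rw [norm_pow]; exact pow_le_one₀ (norm_nonneg x) hx)
  calc ‖∑ i ∈ Finset.range m, x ^ i‖ * ‖x - 1‖ ≤ 1 * ‖x - 1‖ :=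
        mul_le_mul_of_nonneg_right h1 (norm_nonneg _)
    _ = ‖x - 1‖ := one_mul _

private lemma aux_norm_le_one {p : ℕ} [Fact (Nat.Prime p)] {x : ℚ_[p]}
    (hx : ‖x - 1‖ ≤ 1) : ‖x‖ ≤ 1 := by
  calc ‖x‖ = ‖(x - 1) + 1‖ := by ring_nf
    _ ≤ max ‖x - 1‖ ‖(1 : ℚ_[p])‖ := IsUltrametricDist.norm_add_le_max _ _
    _ ≤ 1 := by simp [hx]

private lemma aux_step {p : ℕ} [Fact (Nat.Prime p)] {x : ℚ_[p]} {r : ℝ}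
    (hr : ‖x - 1‖ ≤ r) (hr1 : r ≤ 1) (hpr : ‖(p : ℚ_[p])‖ ≤ r) :
    ‖x ^ p - 1‖ ≤ r * ‖x - 1‖ := by
  have hx1 : ‖x‖ ≤ 1 := aux_norm_le_one (hr.trans hr1)
  have key : (∑ i ∈ Finset.range p, x ^ i) =
      (∑ i ∈ Finset.range p, (x ^ i - 1)) + (p : ℚ_[p]) := by
    rw [Finset.sum_sub_distrib]
    simp
  have hsum : ‖∑ i ∈ Finset.range p, x ^ i‖ ≤ r := by
    rw [key]
    refine (IsUltrametricDist.norm_add_le_max _ _).trans (max_le ?_ hpr)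
    exact IsUltrametricDist.norm_sum_le_of_forall_le_of_nonneg
      ((norm_nonneg _).trans hr)
      (fun i _ => (aux_pow_sub_one_norm_le hx1 i).trans hr)
  rw [← geom_sum_mul, norm_mul]
  exact mul_le_mul_of_nonneg_right hsum (norm_nonneg _)

private lemma aux_tendsto {p : ℕ} [Fact (Nat.Prime p)] {q : ℚ_[p]} (hq : ‖q - 1‖ < 1) :
    Filter.Tendsto (fun N : ℕ => q ^ p ^ N) Filter.atTop (nhds 1) := by
  set r := max ‖q - 1‖ ‖(p : ℚ_[p])‖ with hrdef
  have hp2 : (1 : ℝ) < p := by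
    exact_mod_cast (Fact.out : Nat.Prime p).one_lt
  have hpn : ‖(p : ℚ_[p])‖ < 1 := by
    rw [Padic.norm_p]
    rw [inv_lt_one_iff₀]; right; exact hp2
  have hr0 : 0 ≤ r := le_max_of_le_right (norm_nonneg _)
  have hr1 : r < 1 := max_lt hq hpn
  have key : ∀ N : ℕ, ‖q ^ p ^ N - 1‖ ≤ r ^ N * ‖q - 1‖ := by
    intro N
    induction N with
    | zero => simp
    | succ N ih =>
      have hxr : ‖q ^ p ^ N - 1‖ ≤ r :=
        ih.trans (by
          calc r ^ N * ‖q - 1‖ ≤ 1 * r := by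
                exact mul_le_mul (pow_le_one₀ hr0 hr1.le) (le_max_left _ _)
                  (norm_nonneg _) zero_le_one
            _ = r := one_mul r)
      calc ‖q ^ p ^ (N + 1) - 1‖ = ‖(q ^ p ^ N) ^ p - 1‖ := by
            rw [← pow_mul, pow_succ]
        _ ≤ r * ‖q ^ p ^ N - 1‖ := aux_step hxr hr1.le (le_max_right _ _)
        _ ≤ r * (r ^ N * ‖q - 1‖) := mul_le_mul_of_nonneg_left ih hr0
        _ = r ^ (N + 1) * ‖q - 1‖ := by ring
  rw [tendsto_iff_norm_sub_tendsto_zero]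
  have hb : Filter.Tendsto (fun N : ℕ => r ^ N * ‖q - 1‖) Filter.atTop (nhds 0) := by
    simpa using (tendsto_pow_atTop_nhds_zero_of_lt_one hr0 hr1).mul_const ‖q - 1‖
  exact squeeze_zero (fun N => norm_nonneg _) key hb

private lemma aux_sum_ident {p : ℕ} [Fact (Nat.Prime p)] (q : ℚ_[p]) (n M : ℕ) (hM : Odd M)
    (hql : ∀ l : ℕ, 1 + q ^ l ≠ 0) :
    ∑ x ∈ Finset.range M, (-1 : ℚ_[p]) ^ x * ((1 - q ^ x) / (1 - q)) ^ n =
    (1 / (1 - q)) ^ n * ∑ l ∈ Finset.range (n + 1),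
      (n.choose l : ℚ_[p]) * (-1) ^ l * (1 + (q ^ M) ^ l) / (1 + q ^ l) := by
  have step1 : ∑ x ∈ Finset.range M, (-1 : ℚ_[p]) ^ x * ((1 - q ^ x) / (1 - q)) ^ n =
      (1 / (1 - q)) ^ n * ∑ x ∈ Finset.range M, (-1 : ℚ_[p]) ^ x * (1 - q ^ x) ^ n := by
    rw [Finset.mul_sum]
    refine Finset.sum_congr rfl (fun x _ => ?_)
    rw [div_pow, one_div, div_eq_mul_inv, ← inv_pow]
    ring
  rw [step1]
  congr 1
  calc ∑ x ∈ Finset.range M, (-1 : ℚ_[p]) ^ x * (1 - q ^ x) ^ n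
      = ∑ x ∈ Finset.range M, ∑ l ∈ Finset.range (n + 1),
          (-1 : ℚ_[p]) ^ x * ((-(q ^ x)) ^ l * 1 ^ (n - l) * (n.choose l : ℚ_[p])) := by
        refine Finset.sum_congr rfl (fun x _ => ?_)
        rw [show (1 : ℚ_[p]) - q ^ x = -(q ^ x) + 1 by ring, add_pow, Finset.mul_sum]
    _ = ∑ l ∈ Finset.range (n + 1), ∑ x ∈ Finset.range M,
          (n.choose l : ℚ_[p]) * (-1) ^ l * (-(q ^ l)) ^ x := by
        rw [Finset.sum_comm]
        refine Finset.sum_congr rfl (fun l _ => Finset.sum_congr rfl (fun x _ => ?_))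
        rw [one_pow, neg_pow (q ^ x) l, neg_pow (q ^ l) x, ← pow_mul, ← pow_mul,
          Nat.mul_comm x l]
        ring
    _ = ∑ l ∈ Finset.range (n + 1),
          (n.choose l : ℚ_[p]) * (-1) ^ l * (1 + (q ^ M) ^ l) / (1 + q ^ l) := by
        refine Finset.sum_congr rfl (fun l _ => ?_)
        rw [← Finset.mul_sum]
        have hne : -(q ^ l) ≠ 1 := by
          intro h
          exact hql l (by rw [show q ^ l = -1 by linear_combination -h]; ring)
        rw [geom_sum_eq hne]
        rw [hM.neg_pow, ← pow_mul, Nat.mul_comm l M, pow_mul]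
        rw [show -(q ^ M) ^ l - 1 = -((1 + (q ^ M) ^ l)) by ring,
          show -(q ^ l) - 1 = -(1 + q ^ l) by ring, neg_div_neg_eq]
        ring

/-- The modified `q`-Euler number `𝓔_{n,q} = ∫_{ℤ_p} q^{-x} [x]_q^n dμ_{-q}(x)`: the
fermionic Riemann sums `((1+q)/(1+q^{p^N})) ∑_{x<p^N} (-1)^x [x]_q^n` converge in `ℚ_p`,
with limit `[2]_q (1/(1-q))^n ∑_{l=0}^n C(n,l) (-1)^l/(1+q^l)`. -/
theorem modqEulerNumber_padic_integral (p : ℕ) [Fact (Nat.Prime p)] (hp : Odd p)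
    (q : ℚ_[p]) (hq : ‖q - 1‖ < 1) (hq1 : q ≠ 1) (n : ℕ) :
    Filter.Tendsto
      (fun N : ℕ => ((1 + q) / (1 + q ^ p ^ N)) *
        ∑ x ∈ Finset.range (p ^ N), (-1) ^ x * ((1 - q ^ x) / (1 - q)) ^ n)
      Filter.atTop
      (nhds ((1 + q) * (1 / (1 - q)) ^ n *
        ∑ l ∈ Finset.range (n + 1), (n.choose l : ℚ_[p]) * (-1) ^ l / (1 + q ^ l))) := by
  have h2norm : ‖(2 : ℚ_[p])‖ = 1 := by
    have hle : ‖((2 : ℤ) : ℚ_[p])‖ ≤ 1 := Padic.norm_int_le_one 2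
    have hnlt : ¬ ‖((2 : ℤ) : ℚ_[p])‖ < 1 := by
      rw [Padic.norm_intCast_lt_one_iff]
      intro hdvd
      have hdvd' : p ∣ 2 := by exact_mod_cast hdvd
      have := (Nat.prime_dvd_prime_iff_eq (Fact.out : Nat.Prime p) Nat.prime_two).mp hdvd'
      rw [this] at hp
      exact (Nat.not_odd_iff_even.mpr (by norm_num)) hp
    push_cast at hle hnlt
    linarith [lt_or_ge ‖(2 : ℚ_[p])‖ 1 |>.resolve_left hnlt, hle]
  have hqn : ‖q‖ ≤ 1 := aux_norm_le_one hq.le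
  have hql : ∀ l : ℕ, 1 + q ^ l ≠ 0 := by
    intro l h
    have hql1 : q ^ l = -1 := by linear_combination h
    have : ‖q ^ l - 1‖ < 1 := lt_of_le_of_lt (aux_pow_sub_one_norm_le hqn l) hq
    rw [hql1, show (-1 : ℚ_[p]) - 1 = -2 by ring, norm_neg, h2norm] at this
    exact lt_irrefl 1 this
  have h2ne : (2 : ℚ_[p]) ≠ 0 := by
    intro h; rw [h, norm_zero] at h2norm; linarith
  have ht : Filter.Tendsto (fun N : ℕ => q ^ p ^ N) Filter.atTop (nhds 1) := aux_tendsto hq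
  have hden : Filter.Tendsto (fun N : ℕ => 1 + q ^ p ^ N) Filter.atTop (nhds 2) := by
    have := tendsto_const_nhds (x := (1 : ℚ_[p])) (f := Filter.atTop (α := ℕ)) |>.add ht
    simpa [one_add_one_eq_two] using this
  have hfrac : Filter.Tendsto (fun N : ℕ => (1 + q) / (1 + q ^ p ^ N)) Filter.atTop
      (nhds ((1 + q) / 2)) := tendsto_const_nhds.div hden h2ne
  have hsum : Filter.Tendsto
      (fun N : ℕ => ∑ l ∈ Finset.range (n + 1),
        (n.choose l : ℚ_[p]) * (-1) ^ l * (1 + (q ^ p ^ N) ^ l) / (1 + q ^ l))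
      Filter.atTop
      (nhds (∑ l ∈ Finset.range (n + 1),
        (n.choose l : ℚ_[p]) * (-1) ^ l * (1 + (1 : ℚ_[p]) ^ l) / (1 + q ^ l))) := by
    refine tendsto_finset_sum _ (fun l _ => ?_)
    exact ((tendsto_const_nhds.mul ((tendsto_const_nhds.add (ht.pow l)))).div_const _)
  have hmain : Filter.Tendsto
      (fun N : ℕ => ((1 + q) / (1 + q ^ p ^ N)) *
        ((1 / (1 - q)) ^ n * ∑ l ∈ Finset.range (n + 1),
          (n.choose l : ℚ_[p]) * (-1) ^ l * (1 + (q ^ p ^ N) ^ l) / (1 + q ^ l)))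
      Filter.atTop
      (nhds ((1 + q) / 2 * ((1 / (1 - q)) ^ n * ∑ l ∈ Finset.range (n + 1),
          (n.choose l : ℚ_[p]) * (-1) ^ l * (1 + (1 : ℚ_[p]) ^ l) / (1 + q ^ l)))) :=
    hfrac.mul (tendsto_const_nhds.mul hsum)
  have hval : (1 + q) / 2 * ((1 / (1 - q)) ^ n * ∑ l ∈ Finset.range (n + 1),
      (n.choose l : ℚ_[p]) * (-1) ^ l * (1 + (1 : ℚ_[p]) ^ l) / (1 + q ^ l)) =
      (1 + q) * (1 / (1 - q)) ^ n *
        ∑ l ∈ Finset.range (n + 1), (n.choose l : ℚ_[p]) * (-1) ^ l / (1 + q ^ l) := by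
    have hs : ∑ l ∈ Finset.range (n + 1),
        (n.choose l : ℚ_[p]) * (-1) ^ l * (1 + (1 : ℚ_[p]) ^ l) / (1 + q ^ l) =
        2 * ∑ l ∈ Finset.range (n + 1),
          (n.choose l : ℚ_[p]) * (-1) ^ l / (1 + q ^ l) := by
      rw [Finset.mul_sum]
      refine Finset.sum_congr rfl (fun l _ => ?_)
      rw [one_pow]
      ring
    rw [hs]
    field_simp
  rw [hval] at hmain
  refine hmain.congr (fun N => ?_)
  rw [aux_sum_ident q n (p ^ N) (hp.pow) hql]
end
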